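/- arXiv:2401.11251 — 2 statements merged into one kernel-verified Lean document; each statement's English description precedes it below -/
import Mathlib

section
/- Let ω and σ be weight functions with ω(t)=o(t²) and σ(t)=o(t²) as t→∞. Then σ(t)=O(ω(t)) as t→∞ if and only if S_{(ω)}(ℝ^d) ⊆ S_{(σ)}(ℝ^d) with continuous inclusion for all dimensions d∈ℕ; here continuity of the inclusion in dimension d means: for every μ>0 there exist ν>0 and C≥1 such that q_{σ,μ}(f) ≤ C·q_{ω,ν}(f) for every f∈S_{(ω)}(ℝ^d), where q_{ω,ν}(f):=sup_{α,β∈ℕ_0^d} sup_{x∈ℝ^d} |x^α ∂^β f(x)|·exp(−(1/ν)φ*_ω(ν|α+β|)). The implication from σ=O(ω) to the continuous inclusions holds even for general weight functions, and for the converse only the continuous inclusion in dimension d=1 is required. -/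
open Filter Asymptotics

noncomputable section

/-- Partial derivative operator in coordinate `i`. -/
def pderivOp {d : ℕ} (i : Fin d) (f : (Fin d → ℝ) → ℝ) : (Fin d → ℝ) → ℝ :=
  fun x => fderiv ℝ f x (Pi.single i 1)

/-- Iterated partial derivative `∂^β f` for a multi-index `β`. -/
def mderiv {d : ℕ} (β : Fin d → ℕ) (f : (Fin d → ℝ) → ℝ) : (Fin d → ℝ) → ℝ :=
  (List.finRange d).foldr (fun i g => (pderivOp i)^[β i] g) f

/-- The monomial `x^α` for a multi-index `α`. -/
def mpow {d : ℕ} (x : Fin d → ℝ) (α : Fin d → ℕ) : ℝ := ∏ i, x i ^ α i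

/-- The length `|α| = α 0 + ⋯ + α (d-1)` of a multi-index. -/
def msize {d : ℕ} (α : Fin d → ℕ) : ℕ := ∑ i, α i

/-- Young conjugate `φ*_ω(s) = sup_{t ≥ 0} (s·t − ω(e^t))`. -/
def youngConj (ω : ℝ → ℝ) (s : ℝ) : ℝ :=
  sSup {y : ℝ | ∃ t : ℝ, 0 ≤ t ∧ y = s * t - ω (Real.exp t)}

/-- A general weight function: continuous, increasing, `ω:[0,∞)→[0,∞)`, with
conditions (α), (γ), (δ) (condition (β) is not required). -/
structure IsGenWeightFun (ω : ℝ → ℝ) : Prop where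
  nonneg : ∀ t, 0 ≤ t → 0 ≤ ω t
  continuous : ContinuousOn ω (Set.Ici 0)
  mono : MonotoneOn ω (Set.Ici 0)
  alpha : ∃ L : ℝ, 1 ≤ L ∧ ∀ t, 0 ≤ t → ω (2 * t) ≤ L * (ω t + 1)
  gamma : Real.log =o[Filter.atTop] ω
  delta : ConvexOn ℝ (Set.Ici 0) fun t => ω (Real.exp t)

/-- A weight function: a general weight function which moreover satisfies
(β): `ω(t) = O(t²)` as `t → ∞`. -/
structure IsWeightFun (ω : ℝ → ℝ) extends IsGenWeightFun ω : Prop where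
  beta : ω =O[Filter.atTop] fun t : ℝ => t ^ 2

/-- The weight `exp((1/l)·φ*_ω(l·k))`. -/
def wWeight (ω : ℝ → ℝ) (l : ℝ) (k : ℕ) : ℝ :=
  Real.exp (1 / l * youngConj ω (l * (k : ℝ)))

/-- Roumieu Gelfand–Shilov class `S_{{ω}}(ℝ^d)`. -/
def SRoumieuW (ω : ℝ → ℝ) (d : ℕ) : Set ((Fin d → ℝ) → ℝ) :=
  {f | ContDiff ℝ (⊤ : ℕ∞) f ∧ ∃ l > 0, ∃ C > 0, ∀ α β : Fin d → ℕ, ∀ x : Fin d → ℝ,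
    |mpow x α * mderiv β f x| ≤ C * wWeight ω l (msize α + msize β)}

/-- Beurling Gelfand–Shilov class `S_{(ω)}(ℝ^d)`. -/
def SBeurlingW (ω : ℝ → ℝ) (d : ℕ) : Set ((Fin d → ℝ) → ℝ) :=
  {f | ContDiff ℝ (⊤ : ℕ∞) f ∧ ∀ l > 0, ∃ C > 0, ∀ α β : Fin d → ℕ, ∀ x : Fin d → ℝ,
    |mpow x α * mderiv β f x| ≤ C * wWeight ω l (msize α + msize β)}

/-- Continuity of the inclusion `S_(ω)(ℝ^d) ⊆ S_(σ)(ℝ^d)`: for every `μ > 0` there are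
`ν > 0` and `C ≥ 1` with `q_{σ,μ}(f) ≤ C · q_{ω,ν}(f)` for all `f ∈ S_(ω)(ℝ^d)`,
expressed via bounding constants. -/
def contIncBW (ω σ : ℝ → ℝ) (d : ℕ) : Prop :=
  ∀ μ > 0, ∃ ν > 0, ∃ C : ℝ, 1 ≤ C ∧ ∀ f ∈ SBeurlingW ω d, ∀ D : ℝ, 0 ≤ D →
    (∀ α β : Fin d → ℕ, ∀ x : Fin d → ℝ,
      |mpow x α * mderiv β f x| ≤ D * wWeight ω ν (msize α + msize β)) →
    (∀ α β : Fin d → ℕ, ∀ x : Fin d → ℝ,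
      |mpow x α * mderiv β f x| ≤ C * D * wWeight σ μ (msize α + msize β))

/-- `M ∈ LC`: normalized, log-convex, with `M_p^{1/p} → ∞`. -/
structure IsLC (M : ℕ → ℝ) : Prop where
  pos : ∀ p, 0 < M p
  norm0 : M 0 = 1
  norm1 : 1 ≤ M 1
  logConvex : ∀ p : ℕ, M (p + 1) ^ 2 ≤ M p * M (p + 2)
  root_tendsto : Filter.Tendsto (fun p : ℕ => M p ^ (1 / (p : ℝ))) Filter.atTop Filter.atTop

/-- `M ⪯ N`: `∃ C ≥ 1, ∀ p, M_p ≤ C^p N_p`. -/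
def seqPreceq (M N : ℕ → ℝ) : Prop := ∃ C : ℝ, 1 ≤ C ∧ ∀ p : ℕ, M p ≤ C ^ p * N p

/-- `M ◁ N`: `(M_p/N_p)^{1/p} → 0`. -/
def seqLtriangle (M N : ℕ → ℝ) : Prop :=
  Filter.Tendsto (fun p : ℕ => (M p / N p) ^ (1 / (p : ℝ))) Filter.atTop (nhds 0)

/-- `‖f‖_{∞,M,h} ≤ C`, expressed pointwise. -/
def seqBound {d : ℕ} (M : ℕ → ℝ) (h C : ℝ) (f : (Fin d → ℝ) → ℝ) : Prop :=
  ∀ α β : Fin d → ℕ, ∀ x : Fin d → ℝ,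
    |mpow x α * mderiv β f x| ≤ C * h ^ (msize α + msize β) * M (msize α + msize β)

/-- Roumieu class `S_{{M}}(ℝ^d)` for a single weight sequence. -/
def SRoumieuSeq (M : ℕ → ℝ) (d : ℕ) : Set ((Fin d → ℝ) → ℝ) :=
  {f | ContDiff ℝ (⊤ : ℕ∞) f ∧ ∃ C > 0, ∃ h > 0, seqBound M h C f}

/-- Beurling class `S_(M)(ℝ^d)` for a single weight sequence. -/
def SBeurlingSeq (M : ℕ → ℝ) (d : ℕ) : Set ((Fin d → ℝ) → ℝ) :=
  {f | ContDiff ℝ (⊤ : ℕ∞) f ∧ ∀ h > 0, ∃ C > 0, seqBound M h C f}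

/-- Moderate growth (M2). -/
def condM2 (M : ℕ → ℝ) : Prop := ∃ C : ℝ, 1 ≤ C ∧ ∀ p q : ℕ, M (p + q) ≤ C ^ (p + q) * M p * M q

/-- Derivation closedness (M2'). -/
def condM2' (M : ℕ → ℝ) : Prop := ∃ D : ℝ, 1 ≤ D ∧ ∀ p : ℕ, M (p + 1) ≤ D ^ (p + 1) * M p

/-- Condition (12L2R) for a single sequence. -/
def cond12L2Rseq (M : ℕ → ℝ) : Prop :=
  ∃ B > 0, ∃ C > 0, ∃ H > 0, ∀ p q : ℕ,
    (p : ℝ) ^ ((p : ℝ) / 2) * M q ≤ B * C ^ p * H ^ (p + q) * M (p + q)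

/-- Condition (12L2B) for a single sequence. -/
def cond12L2Bseq (M : ℕ → ℝ) : Prop :=
  ∃ H > 0, ∀ C > 0, ∃ B > 0, ∀ p q : ℕ,
    (p : ℝ) ^ ((p : ℝ) / 2) * M q ≤ B * C ^ p * H ^ (p + q) * M (p + q)

/-- Non-quasianalyticity of a weight sequence: `∑ M_{p-1}/M_p < ∞`. -/
def nonQA (M : ℕ → ℝ) : Prop := Summable fun p : ℕ => M p / M (p + 1)

/-- Continuity of the inclusion `S_(M)(ℝ^d) ⊆ S_(N)(ℝ^d)` for single sequences. -/
def contIncBSeq (M N : ℕ → ℝ) (d : ℕ) : Prop :=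
  ∀ h > 0, ∃ h' > 0, ∃ C : ℝ, 1 ≤ C ∧ ∀ f ∈ SBeurlingSeq M d, ∀ D : ℝ, 0 ≤ D →
    seqBound M h' D f → seqBound N h (C * D) f

/-- A weight matrix: positive normalized sequences, pointwise nondecreasing in the index. -/
def IsWeightMatrix (M : ℝ → ℕ → ℝ) : Prop :=
  (∀ l, 0 < l → (∀ p, 0 < M l p) ∧ M l 0 = 1) ∧
    ∀ l k, 0 < l → l ≤ k → ∀ p, M l p ≤ M k p

/-- Standard log-convexity of a weight matrix. -/
def StdLogConvex (M : ℝ → ℕ → ℝ) : Prop := ∀ l, 0 < l → IsLC (M l)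

/-- Roumieu class `S_{{𝓜}}(ℝ^d)` for a weight matrix. -/
def SRoumieuMat (M : ℝ → ℕ → ℝ) (d : ℕ) : Set ((Fin d → ℝ) → ℝ) :=
  {f | ∃ l > 0, f ∈ SRoumieuSeq (M l) d}

/-- Beurling class `S_(𝓜)(ℝ^d)` for a weight matrix. -/
def SBeurlingMat (M : ℝ → ℕ → ℝ) (d : ℕ) : Set ((Fin d → ℝ) → ℝ) :=
  {f | ∀ l > 0, f ∈ SBeurlingSeq (M l) d}

/-- `𝓜{⪯}𝓝`. -/
def matPreceqR (M N : ℝ → ℕ → ℝ) : Prop := ∀ l > 0, ∃ k > 0, seqPreceq (M l) (N k)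

/-- `𝓜(⪯)𝓝`. -/
def matPreceqB (M N : ℝ → ℕ → ℝ) : Prop := ∀ l > 0, ∃ k > 0, seqPreceq (M k) (N l)

/-- `𝓜 ◁ 𝓝`. -/
def matLtriangle (M N : ℝ → ℕ → ℝ) : Prop := ∀ l > 0, ∀ k > 0, seqLtriangle (M l) (N k)

/-- Condition (12L2R) for a weight matrix (Roumieu). -/
def cond12L2RMat (M : ℝ → ℕ → ℝ) : Prop :=
  ∀ l > 0, ∃ k, l ≤ k ∧ ∃ B > 0, ∃ C > 0, ∃ H > 0, ∀ p q : ℕ,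
    (p : ℝ) ^ ((p : ℝ) / 2) * M l q ≤ B * C ^ p * H ^ (p + q) * M k (p + q)

/-- Condition (M2')_R for a weight matrix (Roumieu). -/
def condM2'RMat (M : ℝ → ℕ → ℝ) : Prop :=
  ∀ l > 0, ∃ k, l ≤ k ∧ ∃ A : ℝ, 1 ≤ A ∧ ∀ p : ℕ, M l (p + 1) ≤ A ^ (p + 1) * M k p

/-- Condition (12L2B) for a weight matrix (Beurling). -/
def cond12L2BMat (M : ℝ → ℕ → ℝ) : Prop :=
  ∀ l > 0, ∃ k, 0 < k ∧ k ≤ l ∧ ∃ H > 0, ∀ C > 0, ∃ B > 0, ∀ p q : ℕ,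
    (p : ℝ) ^ ((p : ℝ) / 2) * M k q ≤ B * C ^ p * H ^ (p + q) * M l (p + q)

/-- Condition (M2')_B for a weight matrix (Beurling). -/
def condM2'BMat (M : ℝ → ℕ → ℝ) : Prop :=
  ∀ l > 0, ∃ k, 0 < k ∧ k ≤ l ∧ ∃ A : ℝ, 1 ≤ A ∧ ∀ p : ℕ, M k (p + 1) ≤ A ^ (p + 1) * M l p

/-- Continuity of the inclusion `S_(𝓜)(ℝ^d) ⊆ S_(𝓝)(ℝ^d)` for weight matrices. -/
def contIncBMat (M N : ℝ → ℕ → ℝ) (d : ℕ) : Prop :=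
  ∀ l > 0, ∀ h > 0, ∃ k > 0, ∃ h' > 0, ∃ C : ℝ, 1 ≤ C ∧
    ∀ f ∈ SBeurlingMat M d, ∀ D : ℝ, 0 ≤ D →
      seqBound (M k) h' D f → seqBound (N l) h (C * D) f

/-- Associated function `ω_M(t) = sup_p log(t^p / M_p)`. -/
def assocFun (M : ℕ → ℝ) (t : ℝ) : ℝ :=
  sSup {y : ℝ | ∃ p : ℕ, y = Real.log (t ^ p / M p)}

/-- Condition (α) for a function. -/
def condAlpha (ω : ℝ → ℝ) : Prop := ∃ L : ℝ, 1 ≤ L ∧ ∀ t, 0 ≤ t → ω (2 * t) ≤ L * (ω t + 1)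

/-- Condition (ω6): `∃ H ≥ 1, ∀ t ≥ 0, 2ω(t) ≤ ω(Ht) + H`. -/
def condOmega6 (ω : ℝ → ℝ) : Prop := ∃ H : ℝ, 1 ≤ H ∧ ∀ t, 0 ≤ t → 2 * ω t ≤ ω (H * t) + H

/-- The sequence `W^{(λ)}_p = exp((1/λ)φ*_ω(λ p))`. -/
def wSeq (ω : ℝ → ℝ) (l : ℝ) (p : ℕ) : ℝ := Real.exp (1 / l * youngConj ω (l * (p : ℝ)))

end
namespace GSAux

open Real Set Filter Asymptotics

/-! ### Young conjugate basics -/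

lemma yc_le {ω : ℝ → ℝ} {s B : ℝ} (h : ∀ t, 0 ≤ t → s * t - ω (Real.exp t) ≤ B) :
    youngConj ω s ≤ B := by
  refine csSup_le ⟨s * 0 - ω (Real.exp 0), ⟨0, le_rfl, rfl⟩⟩ ?_
  rintro y ⟨t, ht, rfl⟩; exact h t ht

lemma yc_ge {ω : ℝ → ℝ} {s : ℝ}
    (hb : BddAbove {y : ℝ | ∃ t : ℝ, 0 ≤ t ∧ y = s * t - ω (Real.exp t)})
    {t : ℝ} (ht : 0 ≤ t) : s * t - ω (Real.exp t) ≤ youngConj ω s :=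
  le_csSup hb ⟨t, ht, rfl⟩

lemma yc_bdd {ω : ℝ → ℝ} (hnn : ∀ t, 0 ≤ t → 0 ≤ ω t) (hγ : Real.log =o[atTop] ω)
    {s : ℝ} (hs : 0 ≤ s) :
    BddAbove {y : ℝ | ∃ t : ℝ, 0 ≤ t ∧ y = s * t - ω (Real.exp t)} := by
  have hc : (0 : ℝ) < 1 / (s + 1) := by positivity
  obtain ⟨T, hT⟩ := Filter.eventually_atTop.mp (hγ.def hc)
  set T1 : ℝ := max T 1 with hT1
  set T3 : ℝ := max (Real.log T1) 0 with hT3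
  refine ⟨max (s * T3) 0, ?_⟩
  rintro y ⟨t, ht, rfl⟩
  rcases le_or_gt t T3 with h | h
  · have h1 : s * t ≤ s * T3 := mul_le_mul_of_nonneg_left h hs
    have h2 : 0 ≤ ω (Real.exp t) := hnn _ (Real.exp_pos t).le
    have : s * t - ω (Real.exp t) ≤ s * T3 := by linarith
    exact this.trans (le_max_left _ _)
  · have ht3 : Real.log T1 ≤ t := le_of_lt (lt_of_le_of_lt (le_max_left _ _) h)
    have hT1pos : (0 : ℝ) < T1 := lt_of_lt_of_le one_pos (le_max_right _ _)
    have hexp : T1 ≤ Real.exp t := by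
      calc T1 = Real.exp (Real.log T1) := (Real.exp_log hT1pos).symm
      _ ≤ Real.exp t := Real.exp_le_exp.mpr ht3
    have hTe : T ≤ Real.exp t := le_trans (le_max_left _ _) hexp
    have := hT _ hTe
    rw [Real.norm_eq_abs, Real.norm_eq_abs, Real.log_exp] at this
    have habs : |t| = t := abs_of_nonneg ht
    rw [habs, abs_of_nonneg (hnn _ (Real.exp_pos t).le)] at this
    -- t ≤ (1/(s+1)) * ω (exp t)
    have hω : (s + 1) * t ≤ ω (Real.exp t) := by
      have hs1 : (0 : ℝ) < s + 1 := by linarith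
      rw [div_mul_eq_mul_div, le_div_iff₀ hs1, mul_comm] at this
      linarith [this]
    have : s * t - ω (Real.exp t) ≤ 0 := by nlinarith
    exact this.trans (le_max_right _ _)

lemma yc_zero_le {ω : ℝ → ℝ} (hnn : ∀ t, 0 ≤ t → 0 ≤ ω t) : youngConj ω 0 ≤ 0 := by
  apply yc_le; intro t ht
  have := hnn (Real.exp t) (Real.exp_pos t).le
  linarith

lemma yc_superadd {ω : ℝ → ℝ} (hnn : ∀ t, 0 ≤ t → 0 ≤ ω t) (hγ : Real.log =o[atTop] ω)
    {a b : ℝ} (ha : 0 ≤ a) (hb : 0 ≤ b) :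
    youngConj ω a + youngConj ω b ≤ youngConj ω (a + b) := by
  rcases eq_or_lt_of_le (add_nonneg ha hb) with h0 | hab
  · have ha0 : a = 0 := by linarith [ha, hb]
    have hb0 : b = 0 := by linarith [ha, hb]
    subst ha0; subst hb0
    have := yc_zero_le hnn
    simpa using by linarith [this]
  · have hbdd := yc_bdd hnn hγ (le_of_lt hab)
    have key : ∀ u v : ℝ, 0 ≤ u → 0 ≤ v → u + v = a + b →
        youngConj ω u ≤ (u / (a + b)) * youngConj ω (a + b) := by
      intro u v hu hv huv
      apply yc_le
      intro t ht
      have h1 : (a + b) * t - ω (Real.exp t) ≤ youngConj ω (a + b) := yc_ge hbdd ht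
      have hcoef : 0 ≤ u / (a + b) := div_nonneg hu (le_of_lt hab)
      have h2 : (u / (a + b)) * ((a + b) * t - ω (Real.exp t)) ≤
          (u / (a + b)) * youngConj ω (a + b) := mul_le_mul_of_nonneg_left h1 hcoef
      have h3 : (u / (a + b)) * ((a + b) * t) = u * t := by
        field_simp
      have h4 : 0 ≤ ω (Real.exp t) := hnn _ (Real.exp_pos t).le
      have h5 : u * t - ω (Real.exp t) ≤ (u / (a + b)) * ((a + b) * t - ω (Real.exp t)) := by
        have hfrac : u / (a + b) ≤ 1 := by
          rw [div_le_one hab]; linarith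
        rw [mul_sub, h3]
        nlinarith [mul_nonneg hcoef h4]
      linarith
    have k1 := key a b ha hb rfl
    have k2 := key b a hb ha (by ring)
    have hsum : a / (a + b) + b / (a + b) = 1 := by field_simp
    have hY : a / (a + b) * youngConj ω (a + b) + b / (a + b) * youngConj ω (a + b) =
        youngConj ω (a + b) := by rw [← add_mul, hsum, one_mul]
    linarith

lemma yc_young {ω : ℝ → ℝ} (hnn : ∀ t, 0 ≤ t → 0 ≤ ω t) (hγ : Real.log =o[atTop] ω)
    {u t : ℝ} (hu : 0 ≤ u) (ht : 0 ≤ t) :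
    u * t ≤ youngConj ω u + ω (Real.exp t) := by
  have := yc_ge (yc_bdd hnn hγ hu) ht
  linarith

lemma yc_compare {ω σ : ℝ → ℝ} (hnnσ : ∀ t, 0 ≤ t → 0 ≤ σ t)
    (hγσ : Real.log =o[atTop] σ) {A B u : ℝ}
    (hA : 1 ≤ A) (hcmp : ∀ t, 0 ≤ t → σ t ≤ A * ω t + B) (hu : 0 ≤ u) :
    youngConj ω u ≤ (1 / A) * youngConj σ (A * u) + B / A := by
  have hA0 : (0 : ℝ) < A := lt_of_lt_of_le one_pos hA
  have hbdd := yc_bdd hnnσ hγσ (mul_nonneg (le_of_lt hA0) hu)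
  apply yc_le
  intro t ht
  have h1 : A * u * t - σ (Real.exp t) ≤ youngConj σ (A * u) := yc_ge hbdd ht
  have h2 : σ (Real.exp t) ≤ A * ω (Real.exp t) + B := hcmp _ (Real.exp_pos t).le
  have h3 : (1 / A) * (A * u * t - σ (Real.exp t)) ≤ (1 / A) * youngConj σ (A * u) :=
    mul_le_mul_of_nonneg_left h1 (by positivity)
  have h4 : u * t - ω (Real.exp t) ≤ (A * u * t - σ (Real.exp t) + B) / A := by
    rw [le_div_iff₀ hA0]
    nlinarith [h2]
  have h5 : (A * u * t - σ (Real.exp t) + B) / A =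
      (1 / A) * (A * u * t - σ (Real.exp t)) + B / A := by ring
  linarith

/-! ### quadratic bounds from littleO -/

lemma quad_of_littleO {ω : ℝ → ℝ} (hm : MonotoneOn ω (Set.Ici 0))
    (hnn : ∀ t, 0 ≤ t → 0 ≤ ω t) (ho : ω =o[atTop] fun t : ℝ => t ^ 2)
    {ε : ℝ} (hε : 0 < ε) :
    ∃ Cq : ℝ, 0 ≤ Cq ∧ ∀ u, 0 ≤ u → ω u ≤ ε * u ^ 2 + Cq := by
  obtain ⟨T, hT⟩ := Filter.eventually_atTop.mp (ho.def hε)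
  set T2 : ℝ := max T 0 with hT2
  refine ⟨ω T2, hnn _ (le_max_right _ _), ?_⟩
  intro u hu
  rcases le_or_gt u T2 with h | h
  · have := hm hu (le_max_right T 0) h
    nlinarith [sq_nonneg u]
  · have hTu : T ≤ u := le_of_lt (lt_of_le_of_lt (le_max_left _ _) h)
    have := hT u hTu
    rw [Real.norm_eq_abs, Real.norm_eq_abs] at this
    have h1 : ω u ≤ ε * |u ^ 2| := le_trans (le_abs_self _) this
    rw [abs_of_nonneg (by positivity : (0:ℝ) ≤ u ^ 2)] at h1
    have : 0 ≤ ω T2 := hnn _ (le_max_right _ _)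
    linarith

lemma cmp_of_bigO {ω σ : ℝ → ℝ} (hmσ : MonotoneOn σ (Set.Ici 0))
    (hnnσ : ∀ t, 0 ≤ t → 0 ≤ σ t) (hnnω : ∀ t, 0 ≤ t → 0 ≤ ω t)
    (hO : σ =O[atTop] ω) :
    ∃ A B : ℝ, 1 ≤ A ∧ 0 ≤ B ∧ ∀ t, 0 ≤ t → σ t ≤ A * ω t + B := by
  obtain ⟨cc, hcc⟩ := hO.bound
  obtain ⟨T, hT⟩ := Filter.eventually_atTop.mp hcc
  set T2 : ℝ := max T 0 with hT2
  refine ⟨max cc 1, σ T2, le_max_right _ _, hnnσ _ (le_max_right _ _), ?_⟩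
  intro t ht
  rcases le_or_gt t T2 with h | h
  · have h1 := hmσ ht (le_max_right T 0) h
    have h2 : 0 ≤ ω t := hnnω _ ht
    nlinarith [le_max_right cc (1:ℝ)]
  · have hTt : T ≤ t := le_of_lt (lt_of_le_of_lt (le_max_left _ _) h)
    have := hT t hTt
    rw [Real.norm_eq_abs, Real.norm_eq_abs, abs_of_nonneg (hnnω _ ht)] at this
    have h1 : σ t ≤ cc * ω t := le_trans (le_abs_self _) this
    have h2 : 0 ≤ ω t := hnnω _ ht
    have h3 : 0 ≤ σ T2 := hnnσ _ (le_max_right _ _)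
    nlinarith [le_max_left cc (1:ℝ)]

/-- absorb `R^m m^{m/2}` into the weight. -/
lemma absorb {ω : ℝ → ℝ} (hm : MonotoneOn ω (Set.Ici 0))
    (hnn : ∀ t, 0 ≤ t → 0 ≤ ω t) (hγ : Real.log =o[atTop] ω)
    (ho : ω =o[atTop] fun t : ℝ => t ^ 2)
    {l R : ℝ} (hl : 0 < l) (hR : 1 ≤ R) :
    ∃ c : ℝ, 0 < c ∧ ∀ m : ℕ,
      R ^ m * (m : ℝ) ^ ((m : ℝ) / 2) ≤ c * Real.exp ((1 / l) * youngConj ω (l * m)) := by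
  have hR0 : (0 : ℝ) < R := lt_of_lt_of_le one_pos hR
  set ε : ℝ := l / (2 * Real.exp 1 * R ^ 2) with hεdef
  have hε : 0 < ε := by positivity
  obtain ⟨Cq, hCq0, hCq⟩ := quad_of_littleO hm hnn ho hε
  refine ⟨Real.exp (Cq / l + ω 1 / l), Real.exp_pos _, ?_⟩
  intro m
  rcases Nat.eq_zero_or_pos m with rfl | hm1
  · simp only [Nat.cast_zero, pow_zero, one_mul, mul_zero]
    have h1 : (0 : ℝ) ^ ((0 : ℝ) / 2) = 1 := by norm_num
    rw [h1]
    have h2 : -(ω 1) ≤ youngConj ω 0 := by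
      have := yc_ge (yc_bdd hnn hγ le_rfl) (le_refl (0:ℝ))
      simpa using this
    have h3 : -(ω 1)/l ≤ (1/l) * youngConj ω 0 := by
      have h4 := mul_le_mul_of_nonneg_left h2 (show (0:ℝ) ≤ 1/l by positivity)
      have h5 : -(ω 1)/l = (1/l) * (-(ω 1)) := by ring
      linarith

    calc (1:ℝ) = Real.exp ((Cq / l + ω 1 / l) + (-(ω 1)/l)) * Real.exp (-(Cq/l)) := by
            rw [← Real.exp_add]; ring_nf; rw [Real.exp_zero]
      _ ≤ Real.exp ((Cq / l + ω 1 / l) + (-(ω 1)/l)) * 1 := by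
            have : Real.exp (-(Cq/l)) ≤ 1 := by
              rw [Real.exp_le_one_iff]
              have : 0 ≤ Cq / l := by positivity
              linarith
            have := Real.exp_pos ((Cq / l + ω 1 / l) + (-(ω 1)/l))
            nlinarith
      _ = Real.exp (Cq / l + ω 1 / l) * Real.exp (-(ω 1)/l) := by
            rw [mul_one, Real.exp_add]
      _ ≤ Real.exp (Cq / l + ω 1 / l) * Real.exp ((1/l) * youngConj ω 0) := by
            apply mul_le_mul_of_nonneg_left (Real.exp_le_exp.mpr h3) (Real.exp_pos _).le
  · -- m ≥ 1
    have hmR : (0 : ℝ) < (m : ℝ) := by exact_mod_cast hm1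
    set u : ℝ := (m : ℝ) * Real.exp 1 * R ^ 2 with hu
    have hu1 : (1 : ℝ) ≤ u := by
      have h1 : (1:ℝ) ≤ (m:ℝ) := by exact_mod_cast hm1
      have h2 : (1:ℝ) ≤ Real.exp 1 := by
        have := Real.add_one_le_exp (1:ℝ); linarith
      have h3 : (1:ℝ) ≤ R ^ 2 := by nlinarith
      have h12 : (1:ℝ) * 1 ≤ (m:ℝ) * Real.exp 1 := mul_le_mul h1 h2 one_pos.le (by positivity)
      have h13 : ((m:ℝ) * Real.exp 1) * 1 ≤ ((m:ℝ) * Real.exp 1) * R ^ 2 :=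
        mul_le_mul_of_nonneg_left h3 (by nlinarith)
      nlinarith
    have hu0 : (0 : ℝ) < u := lt_of_lt_of_le one_pos hu1
    set t : ℝ := Real.log u / 2 with htdef
    have ht0 : 0 ≤ t := by
      have := Real.log_nonneg hu1
      positivity
    have hexp2t : Real.exp t ^ 2 = u := by
      rw [← Real.exp_nat_mul]
      push_cast
      rw [show (2:ℝ) * t = Real.log u by rw [htdef]; ring]
      exact Real.exp_log hu0
    have hωt : ω (Real.exp t) ≤ ε * u + Cq := by
      have := hCq (Real.exp t) (Real.exp_pos t).le
      rwa [hexp2t] at this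
    have hεu : ε * u = l * m / 2 := by
      rw [hεdef, hu]; field_simp
    have hyc : l * m * t - (l * m / 2 + Cq) ≤ youngConj ω (l * m) := by
      have h1 := yc_ge (yc_bdd hnn hγ (by positivity : (0:ℝ) ≤ l * m)) ht0
      have : l * m * t - ω (Real.exp t) ≥ l * m * t - (l * m / 2 + Cq) := by
        rw [← hεu] at *; linarith [hωt]
      linarith
    -- (1/l) * yc ≥ m * t - m/2 - Cq/l
    have hdiv : (m : ℝ) * t - (m : ℝ) / 2 - Cq / l ≤ (1 / l) * youngConj ω (l * m) := by
      have h2 : (1/l) * (l * m * t - (l * m / 2 + Cq)) ≤ (1/l) * youngConj ω (l * m) :=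
        mul_le_mul_of_nonneg_left hyc (by positivity)
      have h3 : (1/l) * (l * m * t - (l * m / 2 + Cq)) =
          (m : ℝ) * t - (m : ℝ) / 2 - Cq / l := by field_simp; ring
      linarith
    -- log u = log m + 1 + 2 log R
    have hlogu : Real.log u = Real.log m + 1 + 2 * Real.log R := by
      rw [hu, Real.log_mul (ne_of_gt (mul_pos hmR (Real.exp_pos 1))) (ne_of_gt (pow_pos hR0 2)),
        Real.log_mul (ne_of_gt hmR) (ne_of_gt (Real.exp_pos 1)), Real.log_exp,
        Real.log_pow]
      push_cast; ring
    have hmt : (m : ℝ) * t = (m : ℝ)/2 * Real.log m + (m:ℝ)/2 + (m:ℝ) * Real.log R := by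
      rw [htdef, hlogu]; ring
    -- LHS = exp (m log R + (m/2) log m)
    have hLHS : R ^ m * (m : ℝ) ^ ((m : ℝ) / 2) =
        Real.exp ((m : ℝ) * Real.log R + (m : ℝ)/2 * Real.log m) := by
      rw [Real.exp_add]
      congr 1
      · rw [← Real.log_pow, Real.exp_log (pow_pos hR0 m)]
      · rw [Real.rpow_def_of_pos hmR]; ring_nf
    rw [hLHS]
    have hfinal : (m : ℝ) * Real.log R + (m : ℝ)/2 * Real.log m ≤
        (Cq / l + ω 1 / l) + (1/l) * youngConj ω (l * m) := by
      have hω1 : 0 ≤ ω 1 / l := div_nonneg (hnn 1 one_pos.le) hl.le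
      nlinarith [hdiv, hmt]
    calc Real.exp ((m : ℝ) * Real.log R + (m : ℝ)/2 * Real.log m)
        ≤ Real.exp ((Cq / l + ω 1 / l) + (1/l) * youngConj ω (l * m)) :=
          Real.exp_le_exp.mpr hfinal
      _ = Real.exp (Cq / l + ω 1 / l) * Real.exp ((1/l) * youngConj ω (l * m)) :=
          Real.exp_add _ _

/-! ### elementary real inequalities -/

lemma pow_self_le_exp_mul_factorial (n : ℕ) :
    (n : ℝ) ^ n ≤ Real.exp 1 ^ n * (n.factorial : ℝ) := by
  induction n with
  | zero => simp
  | succ n ih =>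
      have he : (0:ℝ) < Real.exp 1 := Real.exp_pos 1
      have hstep : ((n:ℝ) + 1) ^ n ≤ Real.exp 1 * (n:ℝ) ^ n := by
        rcases Nat.eq_zero_or_pos n with rfl | hn
        · have h := Real.add_one_le_exp (1:ℝ)
          simp only [Nat.cast_zero, zero_add, pow_zero, mul_one]
          linarith
        · have hn0 : (0:ℝ) < (n:ℝ) := by exact_mod_cast hn
          have h1 : (n:ℝ) + 1 = (n:ℝ) * (1 + 1/(n:ℝ)) := by field_simp
          have h2 : (1 + 1/(n:ℝ)) ≤ Real.exp (1/(n:ℝ)) := by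
            have := Real.add_one_le_exp (1/(n:ℝ)); linarith
          have h3 : ((n:ℝ) + 1) ^ n = (n:ℝ) ^ n * (1 + 1/(n:ℝ)) ^ n := by
            rw [h1, mul_pow]
          have h4 : (1 + 1/(n:ℝ)) ^ n ≤ Real.exp (1/(n:ℝ)) ^ n :=
            pow_le_pow_left₀ (by positivity) h2 n
          have h5 : Real.exp (1/(n:ℝ)) ^ n = Real.exp 1 := by
            rw [← Real.exp_nat_mul]
            congr 1; field_simp
          rw [h3]
          calc (n:ℝ) ^ n * (1 + 1/(n:ℝ)) ^ n ≤ (n:ℝ) ^ n * Real.exp 1 := by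
                apply mul_le_mul_of_nonneg_left _ (by positivity)
                rw [← h5]; exact h4
            _ = Real.exp 1 * (n:ℝ) ^ n := by ring
      have hpos : (0:ℝ) ≤ (n:ℝ) + 1 := by positivity
      calc ((n + 1 : ℕ) : ℝ) ^ (n + 1) = ((n:ℝ) + 1) * ((n:ℝ) + 1) ^ n := by
            push_cast; ring
        _ ≤ ((n:ℝ) + 1) * (Real.exp 1 * (n:ℝ) ^ n) := mul_le_mul_of_nonneg_left hstep hpos
        _ ≤ ((n:ℝ) + 1) * (Real.exp 1 * (Real.exp 1 ^ n * (n.factorial : ℝ))) := by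
            apply mul_le_mul_of_nonneg_left _ hpos
            exact mul_le_mul_of_nonneg_left ih he.le
        _ = Real.exp 1 ^ (n + 1) * (((n+1) * n.factorial : ℕ) : ℝ) := by
            push_cast; ring
        _ = Real.exp 1 ^ (n + 1) * ((n+1).factorial : ℝ) := by
            rw [Nat.factorial_succ]

lemma split_half (a b : ℕ) :
    ((a + b : ℕ) : ℝ) ^ (((a + b : ℕ) : ℝ) / 2) ≤
      (4 : ℝ) ^ (a + b) * (a : ℝ) ^ ((a : ℝ) / 2) * (b : ℝ) ^ ((b : ℝ) / 2) := by
  set p := a + b with hp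
  -- squared version
  have hsq : ((p : ℕ) : ℝ) ^ p ≤ (16 : ℝ) ^ p * ((a : ℝ) ^ a * (b : ℝ) ^ b) := by
    have h1 : ((p : ℕ) : ℝ) ^ p ≤ Real.exp 1 ^ p * (p.factorial : ℝ) :=
      pow_self_le_exp_mul_factorial p
    have h2 : (p.factorial : ℝ) = (p.choose a : ℝ) * (a.factorial : ℝ) * (b.factorial : ℝ) := by
      have := Nat.add_choose_mul_factorial_mul_factorial b a
      have hsymm : (b + a).choose a = p.choose a := by rw [hp, Nat.add_comm b a]
      rw [hsymm] at this
      rw [hp, Nat.add_comm a b, ← this]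
      push_cast; rw [hsymm]; ring
    have h3 : (p.choose a : ℕ) ≤ 2 ^ p := by
      calc p.choose a ≤ ∑ i ∈ Finset.range (p + 1), p.choose i :=
            Finset.single_le_sum (fun i _ => Nat.zero_le _)
              (Finset.mem_range.mpr (by rw [hp]; omega))
        _ = 2 ^ p := Nat.sum_range_choose p
    have h4 : (a.factorial : ℝ) ≤ (a : ℝ) ^ a := by
      exact_mod_cast Nat.factorial_le_pow a
    have h5 : (b.factorial : ℝ) ≤ (b : ℝ) ^ b := by
      exact_mod_cast Nat.factorial_le_pow b
    have he : Real.exp 1 ≤ 4 := by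
      have := Real.exp_one_lt_d9; linarith
    have h3' : (p.choose a : ℝ) ≤ (2:ℝ) ^ p := by exact_mod_cast h3
    calc ((p:ℕ) : ℝ) ^ p ≤ Real.exp 1 ^ p * (p.factorial : ℝ) := h1
      _ = Real.exp 1 ^ p * ((p.choose a : ℝ) * (a.factorial : ℝ) * (b.factorial : ℝ)) := by
          rw [h2]
      _ ≤ (4:ℝ) ^ p * ((2:ℝ) ^ p * ((a : ℝ) ^ a * (b : ℝ) ^ b)) := by
          have hf : (0:ℝ) ≤ (a.factorial : ℝ) := by positivity
          have hfb : (0:ℝ) ≤ (b.factorial : ℝ) := by positivity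
          have e4 : Real.exp 1 ^ p ≤ (4:ℝ) ^ p := pow_le_pow_left₀ (Real.exp_pos 1).le he p
          have hc0 : (0:ℝ) ≤ (p.choose a : ℝ) := by positivity
          have haa : (0:ℝ) ≤ (a:ℝ) ^ a := by positivity
          have hbb : (0:ℝ) ≤ (b:ℝ) ^ b := by positivity
          have step1 : (p.choose a : ℝ) * (a.factorial : ℝ) * (b.factorial : ℝ) ≤
              (2:ℝ) ^ p * ((a : ℝ) ^ a * (b : ℝ) ^ b) := by
            calc (p.choose a : ℝ) * (a.factorial : ℝ) * (b.factorial : ℝ) ≤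
                (2:ℝ) ^ p * ((a:ℝ) ^ a) * ((b:ℝ) ^ b) := by
                  apply mul_le_mul _ h5 hfb (by positivity)
                  exact mul_le_mul h3' h4 hf (by positivity)
              _ = (2:ℝ) ^ p * ((a : ℝ) ^ a * (b : ℝ) ^ b) := by ring
          calc Real.exp 1 ^ p * ((p.choose a : ℝ) * (a.factorial : ℝ) * (b.factorial : ℝ))
              ≤ Real.exp 1 ^ p * ((2:ℝ) ^ p * ((a : ℝ) ^ a * (b : ℝ) ^ b)) :=
                mul_le_mul_of_nonneg_left step1 (by positivity)
            _ ≤ (4:ℝ) ^ p * ((2:ℝ) ^ p * ((a : ℝ) ^ a * (b : ℝ) ^ b)) :=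
                mul_le_mul_of_nonneg_right e4 (by positivity)
      _ ≤ (16:ℝ) ^ p * ((a : ℝ) ^ a * (b : ℝ) ^ b) := by
          have e1 : (4:ℝ) ^ p * ((2:ℝ) ^ p * ((a : ℝ) ^ a * (b : ℝ) ^ b)) =
              (8:ℝ) ^ p * ((a : ℝ) ^ a * (b : ℝ) ^ b) := by
            rw [← mul_assoc, ← mul_pow]; norm_num
          rw [e1]
          apply mul_le_mul_of_nonneg_right _ (by positivity)
          exact pow_le_pow_left₀ (by norm_num) (by norm_num) p
  -- take square roots via rpow
  have key : ∀ x : ℝ, 0 ≤ x → ∀ k : ℕ, (x ^ k) ^ ((1:ℝ)/2) = x ^ ((k : ℝ)/2) := by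
    intro x hx k
    rw [← Real.rpow_natCast x k, ← Real.rpow_mul hx]
    congr 1; ring
  have hle : ((p:ℕ) : ℝ) ^ (((p:ℕ):ℝ)/2) ≤
      ((16 : ℝ) ^ p * ((a : ℝ) ^ a * (b : ℝ) ^ b)) ^ ((1:ℝ)/2) := by
    rw [← key ((p:ℕ):ℝ) (by positivity) p]
    exact Real.rpow_le_rpow (by positivity) hsq (by norm_num)
  have hsplit : ((16 : ℝ) ^ p * ((a : ℝ) ^ a * (b : ℝ) ^ b)) ^ ((1:ℝ)/2) =
      (4 : ℝ) ^ p * (a : ℝ) ^ ((a : ℝ) / 2) * (b : ℝ) ^ ((b : ℝ) / 2) := by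
    rw [Real.mul_rpow (by positivity) (by positivity),
      Real.mul_rpow (by positivity) (by positivity)]
    have h16 : ((16:ℝ) ^ p) ^ ((1:ℝ)/2) = (4:ℝ) ^ p := by
      have e1 : (16:ℝ) ^ p = ((4:ℝ) ^ p) ^ (2:ℕ) := by
        rw [show (16:ℝ) = (4:ℝ) ^ (2:ℕ) by norm_num, ← pow_mul, ← pow_mul, Nat.mul_comm]
      rw [e1, key _ (by positivity) 2, show ((2:ℕ):ℝ)/2 = (1:ℝ) by norm_num, Real.rpow_one]
    rw [h16, key ((a:ℕ):ℝ) (by positivity) a, key ((b:ℕ):ℝ) (by positivity) b]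
    ring
  calc ((p:ℕ) : ℝ) ^ (((p:ℕ):ℝ)/2) ≤ ((16 : ℝ) ^ p * ((a : ℝ) ^ a * (b : ℝ) ^ b)) ^ ((1:ℝ)/2) := hle
    _ = (4 : ℝ) ^ p * (a : ℝ) ^ ((a : ℝ) / 2) * (b : ℝ) ^ ((b : ℝ) / 2) := hsplit

lemma pow_mul_exp_neg_le (m : ℕ) {t : ℝ} (ht : 0 ≤ t) :
    t ^ m * Real.exp (-(t ^ 2 / 2)) ≤ (m : ℝ) ^ ((m : ℝ) / 2) := by
  rcases Nat.eq_zero_or_pos m with rfl | hm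
  · simp only [pow_zero, one_mul, Nat.cast_zero]
    rw [show ((0:ℝ)/2) = 0 by norm_num, Real.rpow_zero]
    rw [Real.exp_le_one_iff]
    nlinarith [sq_nonneg t]
  · have hm0 : (0:ℝ) < (m:ℝ) := by exact_mod_cast hm
    -- x ≤ exp ((x^2-1)/2) for x ≥ 0, with x = t/sqrt m
    have key : ∀ x : ℝ, 0 ≤ x → x ≤ Real.exp ((x ^ 2 - 1)/2) := by
      intro x hx
      have h1 : x ≤ Real.exp (x - 1) := by
        have := Real.add_one_le_exp (x - 1); linarith
      have h2 : x - 1 ≤ (x ^ 2 - 1)/2 := by nlinarith [sq_nonneg (x - 1)]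
      exact h1.trans (Real.exp_le_exp.mpr h2)
    set sm := Real.sqrt (m : ℝ) with hsm
    have hsm0 : 0 < sm := Real.sqrt_pos.mpr hm0
    have hsq : sm ^ 2 = (m : ℝ) := Real.sq_sqrt hm0.le
    set x := t / sm with hx
    have hx0 : 0 ≤ x := by positivity
    have h3 : t = sm * x := by rw [hx]; field_simp
    have h4 : t ^ m = sm ^ m * x ^ m := by rw [h3, mul_pow]
    have h5 : x ^ m ≤ Real.exp ((x ^ 2 - 1)/2) ^ m := pow_le_pow_left₀ hx0 (key x hx0) m
    have h6 : Real.exp ((x ^ 2 - 1)/2) ^ m = Real.exp ((m:ℝ) * ((x ^ 2 - 1)/2)) := by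
      rw [← Real.exp_nat_mul]
    have h7 : (m:ℝ) * ((x ^ 2 - 1)/2) = t ^ 2/2 - (m:ℝ)/2 := by
      rw [hx, div_pow, hsq]
      field_simp
    have h8 : sm ^ m = (m : ℝ) ^ ((m : ℝ)/2) := by
      rw [hsm, ← Real.rpow_natCast (Real.sqrt (m:ℝ)) m,
        Real.rpow_def_of_pos (Real.sqrt_pos.mpr hm0),
        Real.log_sqrt hm0.le, Real.rpow_def_of_pos hm0]
      congr 1; ring
    calc t ^ m * Real.exp (-(t ^ 2 / 2)) = sm ^ m * (x ^ m * Real.exp (-(t ^ 2 / 2))) := by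
          rw [h4]; ring
      _ ≤ sm ^ m * (Real.exp (t ^ 2/2 - (m:ℝ)/2) * Real.exp (-(t ^ 2 / 2))) := by
          apply mul_le_mul_of_nonneg_left _ (by positivity)
          apply mul_le_mul_of_nonneg_right _ (Real.exp_pos _).le
          rw [← h7, ← h6]; exact h5
      _ = sm ^ m * Real.exp (-(m:ℝ)/2) := by
          rw [← Real.exp_add]; congr 1; ring
      _ ≤ sm ^ m * 1 := by
          apply mul_le_mul_of_nonneg_left _ (by positivity)
          rw [Real.exp_le_one_iff]
          linarith
      _ = (m : ℝ) ^ ((m : ℝ)/2) := by rw [mul_one, h8]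

/-! ### Hermite bounds -/

lemma derivative_hermite (n : ℕ) :
    Polynomial.derivative (Polynomial.hermite (n + 1)) = (n + 1) • Polynomial.hermite n := by
  induction n with
  | zero =>
      rw [Polynomial.hermite_one, Polynomial.derivative_X, Polynomial.hermite_zero]
      simp
  | succ n ih =>
      rw [Polynomial.hermite_succ (n+1), Polynomial.derivative_sub, Polynomial.derivative_mul,
        Polynomial.derivative_X, one_mul, ih, Polynomial.derivative_smul,
        mul_smul_comm, add_sub_assoc, ← smul_sub, ← Polynomial.hermite_succ n,
        succ_nsmul, succ_nsmul]
      simp only [two_nsmul, succ_nsmul]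
      abel

lemma hermite_abs_bound (n : ℕ) (y : ℝ) :
    |Polynomial.aeval y (Polynomial.hermite n)| ≤ 2 ^ n * (y ^ 2 + n) ^ ((n : ℝ) / 2) := by
  induction n using Nat.strong_induction_on with
  | _ n ih =>
    match n with
    | 0 => 
        rw [Polynomial.hermite_zero]
        simp only [Nat.cast_zero, pow_zero, map_one, abs_one, add_zero]
        rw [show ((0:ℝ)/2) = 0 by norm_num, Real.rpow_zero, one_mul]
    | 1 =>
        rw [Polynomial.hermite_one]
        simp only [Polynomial.aeval_X, pow_one, Nat.cast_one]
        have h1 : |y| = (y ^ 2) ^ ((1:ℝ)/2) := by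
          rw [← Real.sqrt_eq_rpow, Real.sqrt_sq_eq_abs]
        have h2 : (y ^ 2) ^ ((1:ℝ)/2) ≤ (y ^ 2 + 1) ^ ((1:ℝ)/2) :=
          Real.rpow_le_rpow (sq_nonneg y) (by linarith) (by norm_num)
        have h3 : (0:ℝ) ≤ (y ^ 2 + 1) ^ ((1:ℝ)/2) := Real.rpow_nonneg (by positivity) _
        calc |y| = (y ^ 2) ^ ((1:ℝ)/2) := h1
          _ ≤ (y ^ 2 + 1) ^ ((1:ℝ)/2) := h2
          _ ≤ 2 * (y ^ 2 + 1) ^ ((1:ℝ)/2) := by linarith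
    | (n+2) =>
        have ih1 := ih (n+1) (by omega)
        have ih0 := ih n (by omega)
        have heval : Polynomial.aeval y (Polynomial.hermite (n+2)) =
            y * Polynomial.aeval y (Polynomial.hermite (n+1)) -
              ((n:ℝ)+1) * Polynomial.aeval y (Polynomial.hermite n) := by
          rw [Polynomial.hermite_succ (n+1), map_sub, map_mul, Polynomial.aeval_X,
            derivative_hermite n, map_nsmul]
          push_cast
          ring
        set Q : ℝ := y ^ 2 + ((n:ℝ) + 2) with hQ
        have hQpos : (0:ℝ) < Q := by positivity
        have hQge : ((n:ℝ) + 1) ≤ Q := by nlinarith [sq_nonneg y]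
        have habs : |Polynomial.aeval y (Polynomial.hermite (n+2))| ≤
            |y| * |Polynomial.aeval y (Polynomial.hermite (n+1))| +
              ((n:ℝ)+1) * |Polynomial.aeval y (Polynomial.hermite n)| := by
          rw [heval]
          calc |y * Polynomial.aeval y (Polynomial.hermite (n+1)) -
              ((n:ℝ)+1) * Polynomial.aeval y (Polynomial.hermite n)|
              ≤ |y * Polynomial.aeval y (Polynomial.hermite (n+1))| +
                |((n:ℝ)+1) * Polynomial.aeval y (Polynomial.hermite n)| := abs_sub _ _
            _ = |y| * |Polynomial.aeval y (Polynomial.hermite (n+1))| +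
                ((n:ℝ)+1) * |Polynomial.aeval y (Polynomial.hermite n)| := by
                rw [abs_mul, abs_mul, abs_of_nonneg (by positivity : (0:ℝ) ≤ (n:ℝ)+1)]
        -- bound the two terms
        have hy : |y| ≤ Q ^ ((1:ℝ)/2) := by
          rw [← Real.sqrt_eq_rpow, ← Real.sqrt_sq_eq_abs]
          apply Real.sqrt_le_sqrt
          nlinarith
        have hb1 : (y ^ 2 + ((n:ℕ)+1 : ℕ)) ^ ((((n:ℕ)+1 : ℕ):ℝ)/2) ≤ Q ^ (((n:ℝ)+1)/2) := by
          push_cast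
          apply Real.rpow_le_rpow (by positivity) (by rw [hQ]; linarith) (by positivity)
        have hb0 : (y ^ 2 + (n:ℕ)) ^ (((n:ℕ):ℝ)/2) ≤ Q ^ ((n:ℝ)/2) := by
          push_cast
          apply Real.rpow_le_rpow (by positivity) (by rw [hQ]; linarith) (by positivity)
        have hmerge1 : Q ^ ((1:ℝ)/2) * Q ^ (((n:ℝ)+1)/2) = Q ^ (((n:ℝ)+2)/2) := by
          rw [← Real.rpow_add hQpos]; congr 1; ring
        have hmerge2 : Q * Q ^ ((n:ℝ)/2) = Q ^ (((n:ℝ)+2)/2) := by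
          nth_rewrite 1 [← Real.rpow_one Q]
          rw [← Real.rpow_add hQpos]; congr 1; ring
        have hQr : (0:ℝ) ≤ Q ^ (((n:ℝ)+2)/2) := Real.rpow_nonneg hQpos.le _
        have t1 : |y| * |Polynomial.aeval y (Polynomial.hermite (n+1))| ≤
            2 ^ (n+1) * Q ^ (((n:ℝ)+2)/2) := by
          calc |y| * |Polynomial.aeval y (Polynomial.hermite (n+1))|
              ≤ Q ^ ((1:ℝ)/2) * (2 ^ (n+1) * (y ^ 2 + ((n:ℕ)+1:ℕ)) ^ ((((n:ℕ)+1:ℕ):ℝ)/2)) := by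
                apply mul_le_mul hy _ (abs_nonneg _) (Real.rpow_nonneg hQpos.le _)
                exact_mod_cast ih1
            _ ≤ Q ^ ((1:ℝ)/2) * (2 ^ (n+1) * Q ^ (((n:ℝ)+1)/2)) := by
                apply mul_le_mul_of_nonneg_left _ (Real.rpow_nonneg hQpos.le _)
                exact mul_le_mul_of_nonneg_left hb1 (by positivity)
            _ = 2 ^ (n+1) * (Q ^ ((1:ℝ)/2) * Q ^ (((n:ℝ)+1)/2)) := by ring
            _ = 2 ^ (n+1) * Q ^ (((n:ℝ)+2)/2) := by rw [hmerge1]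
        have t0 : ((n:ℝ)+1) * |Polynomial.aeval y (Polynomial.hermite n)| ≤
            2 ^ n * Q ^ (((n:ℝ)+2)/2) := by
          calc ((n:ℝ)+1) * |Polynomial.aeval y (Polynomial.hermite n)|
              ≤ ((n:ℝ)+1) * (2 ^ n * (y ^ 2 + (n:ℕ)) ^ (((n:ℕ):ℝ)/2)) := by
                apply mul_le_mul_of_nonneg_left _ (by positivity)
                exact_mod_cast ih0
            _ ≤ Q * (2 ^ n * Q ^ ((n:ℝ)/2)) := by
                apply mul_le_mul hQge _ (by positivity) hQpos.le
                exact mul_le_mul_of_nonneg_left hb0 (by positivity)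
            _ = 2 ^ n * (Q * Q ^ ((n:ℝ)/2)) := by ring
            _ = 2 ^ n * Q ^ (((n:ℝ)+2)/2) := by rw [hmerge2]
        have hfin : ((2:ℝ) ^ (n+1) + 2 ^ n) ≤ 2 ^ (n+2) := by
          have : (2:ℝ) ^ (n+1) = 2 * 2 ^ n := by ring
          have h2 : (2:ℝ) ^ (n+2) = 4 * 2 ^ n := by ring
          nlinarith [pow_pos (show (0:ℝ) < 2 by norm_num) n]
        have goalcast : ((((n:ℕ)+2:ℕ)):ℝ)/2 = ((n:ℝ)+2)/2 := by push_cast; ring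
        calc |Polynomial.aeval y (Polynomial.hermite (n+2))| ≤
            |y| * |Polynomial.aeval y (Polynomial.hermite (n+1))| +
              ((n:ℝ)+1) * |Polynomial.aeval y (Polynomial.hermite n)| := habs
          _ ≤ 2 ^ (n+1) * Q ^ (((n:ℝ)+2)/2) + 2 ^ n * Q ^ (((n:ℝ)+2)/2) := add_le_add t1 t0
          _ = ((2:ℝ) ^ (n+1) + 2 ^ n) * Q ^ (((n:ℝ)+2)/2) := by ring
          _ ≤ 2 ^ (n+2) * Q ^ (((n:ℝ)+2)/2) := mul_le_mul_of_nonneg_right hfin hQr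
          _ = 2 ^ (n+2) * (y ^ 2 + ((n:ℕ)+2:ℕ)) ^ (((((n:ℕ)+2:ℕ)):ℝ)/2) := by
              rw [goalcast, hQ]; push_cast; ring_nf

lemma iterate_deriv_shift (n : ℕ) (f : ℝ → ℝ) (a x : ℝ) :
    deriv^[n] (fun y => f (y - a)) x = deriv^[n] f (x - a) := by
  induction n generalizing f x with
  | zero => simp
  | succ n ih =>
      rw [Function.iterate_succ_apply, Function.iterate_succ_apply]
      have h : deriv (fun y => f (y - a)) = fun y => deriv f (y - a) :=
        funext fun y => deriv_comp_sub_const f a y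
      rw [h]
      exact ih (deriv f) x

lemma gaussian_iterate_deriv_abs (m : ℕ) (a x : ℝ) :
    |deriv^[m] (fun y => Real.exp (-((y - a) ^ 2 / 2))) x| =
      |Polynomial.aeval (x - a) (Polynomial.hermite m)| * Real.exp (-((x - a) ^ 2 / 2)) := by
  have h2 := iterate_deriv_shift m (fun z : ℝ => Real.exp (-(z ^ 2 / 2))) a x
  have h3 : |deriv^[m] (fun y : ℝ => Real.exp (-((y - a) ^ 2 / 2))) x| =
      |deriv^[m] (fun z : ℝ => Real.exp (-(z ^ 2 / 2))) (x - a)| := congrArg abs h2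
  rw [h3, Polynomial.deriv_gaussian_eq_hermite_mul_gaussian m (x - a)]
  rw [abs_mul, abs_mul, abs_pow, abs_neg, abs_one, one_pow, one_mul,
    Real.abs_exp]

lemma sq_rpow_half (x : ℝ) (hx : 0 ≤ x) (k : ℕ) : (x ^ 2) ^ ((k : ℝ)/2) = x ^ k := by
  rw [← Real.rpow_natCast x 2, ← Real.rpow_mul hx, ← Real.rpow_natCast x k]
  congr 1; ring

/-- pointwise Gaussian-Hermite bound. -/
lemma point_bound (j m : ℕ) (y : ℝ) :
    |y| ^ j * (|Polynomial.aeval y (Polynomial.hermite m)| * Real.exp (-(y ^ 2 / 2))) ≤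
      2 * 16 ^ m * 4 ^ j * ((j : ℝ) ^ ((j : ℝ)/2) * (m : ℝ) ^ ((m : ℝ)/2)) := by
  set E := Real.exp (-(y ^ 2 / 2)) with hE
  have hE0 : 0 < E := Real.exp_pos _
  have h1 : |Polynomial.aeval y (Polynomial.hermite m)| ≤
      2 ^ m * (y ^ 2 + m) ^ ((m : ℝ)/2) := hermite_abs_bound m y
  -- (y^2+m)^(m/2) ≤ 2^(m/2)(|y|^m + m^(m/2)) ≤ 2^m (|y|^m + m^(m/2))
  have h2 : (y ^ 2 + m) ^ ((m : ℝ)/2) ≤ (2:ℝ) ^ m * (|y| ^ m + (m:ℝ) ^ ((m:ℝ)/2)) := by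
    have hy2 : (0:ℝ) ≤ y ^ 2 := sq_nonneg y
    have hm0 : (0:ℝ) ≤ (m:ℝ) := Nat.cast_nonneg m
    rcases le_total (y ^ 2) ((m:ℝ)) with h | h
    · -- y² ≤ m : y²+m ≤ 2m
      calc (y ^ 2 + m) ^ ((m : ℝ)/2) ≤ ((2:ℝ) * m) ^ ((m : ℝ)/2) := by
            apply Real.rpow_le_rpow (by positivity) (by linarith) (by positivity)
        _ = (2:ℝ) ^ ((m:ℝ)/2) * (m:ℝ) ^ ((m:ℝ)/2) := by
            rw [Real.mul_rpow (by norm_num) hm0]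
        _ ≤ (2:ℝ) ^ m * (m:ℝ) ^ ((m:ℝ)/2) := by
            apply mul_le_mul_of_nonneg_right _ (Real.rpow_nonneg hm0 _)
            calc (2:ℝ) ^ ((m:ℝ)/2) ≤ (2:ℝ) ^ ((m:ℝ)) := by
                  apply Real.rpow_le_rpow_of_exponent_le (by norm_num)
                  linarith [Nat.cast_nonneg (α := ℝ) m]
              _ = (2:ℝ) ^ m := by rw [Real.rpow_natCast]
        _ ≤ (2:ℝ) ^ m * (|y| ^ m + (m:ℝ) ^ ((m:ℝ)/2)) := by
            apply mul_le_mul_of_nonneg_left _ (by positivity)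
            have : (0:ℝ) ≤ |y| ^ m := by positivity
            linarith
    · -- m ≤ y² : y²+m ≤ 2y²
      calc (y ^ 2 + m) ^ ((m : ℝ)/2) ≤ ((2:ℝ) * y ^ 2) ^ ((m : ℝ)/2) := by
            apply Real.rpow_le_rpow (by positivity) (by linarith) (by positivity)
        _ = (2:ℝ) ^ ((m:ℝ)/2) * (y ^ 2) ^ ((m:ℝ)/2) := by
            rw [Real.mul_rpow (by norm_num) hy2]
        _ = (2:ℝ) ^ ((m:ℝ)/2) * |y| ^ m := by
            rw [show y ^ 2 = |y| ^ 2 from (sq_abs y).symm, sq_rpow_half |y| (abs_nonneg y) m]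
        _ ≤ (2:ℝ) ^ m * |y| ^ m := by
            apply mul_le_mul_of_nonneg_right _ (by positivity)
            calc (2:ℝ) ^ ((m:ℝ)/2) ≤ (2:ℝ) ^ ((m:ℝ)) := by
                  apply Real.rpow_le_rpow_of_exponent_le (by norm_num)
                  linarith [Nat.cast_nonneg (α := ℝ) m]
              _ = (2:ℝ) ^ m := by rw [Real.rpow_natCast]
        _ ≤ (2:ℝ) ^ m * (|y| ^ m + (m:ℝ) ^ ((m:ℝ)/2)) := by
            apply mul_le_mul_of_nonneg_left _ (by positivity)
            have : (0:ℝ) ≤ (m:ℝ) ^ ((m:ℝ)/2) := Real.rpow_nonneg (Nat.cast_nonneg m) _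
            linarith
  have habs0 : (0:ℝ) ≤ |y| ^ j := by positivity
  have step1 : |y| ^ j * (|Polynomial.aeval y (Polynomial.hermite m)| * E) ≤
      (2:ℝ) ^ m * (2:ℝ) ^ m * (|y| ^ (j + m) * E + (m:ℝ) ^ ((m:ℝ)/2) * (|y| ^ j * E)) := by
    calc |y| ^ j * (|Polynomial.aeval y (Polynomial.hermite m)| * E)
        ≤ |y| ^ j * ((2 ^ m * ((2:ℝ) ^ m * (|y| ^ m + (m:ℝ) ^ ((m:ℝ)/2)))) * E) := by
          apply mul_le_mul_of_nonneg_left _ habs0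
          apply mul_le_mul_of_nonneg_right _ hE0.le
          calc |Polynomial.aeval y (Polynomial.hermite m)| ≤
              2 ^ m * (y ^ 2 + m) ^ ((m : ℝ)/2) := h1
            _ ≤ 2 ^ m * ((2:ℝ) ^ m * (|y| ^ m + (m:ℝ) ^ ((m:ℝ)/2))) :=
              mul_le_mul_of_nonneg_left h2 (by positivity)
      _ = (2:ℝ) ^ m * (2:ℝ) ^ m * (|y| ^ (j + m) * E + (m:ℝ) ^ ((m:ℝ)/2) * (|y| ^ j * E)) := by
          rw [pow_add]; ring
  have hT1 : |y| ^ (j + m) * E ≤ ((j + m : ℕ):ℝ) ^ (((j + m : ℕ):ℝ)/2) := by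
    rw [hE]
    have := pow_mul_exp_neg_le (j + m) (abs_nonneg y)
    rwa [show |y| ^ 2 = y ^ 2 from sq_abs y] at this
  have hT2 : |y| ^ j * E ≤ ((j:ℕ):ℝ) ^ (((j:ℕ):ℝ)/2) := by
    rw [hE]
    have := pow_mul_exp_neg_le j (abs_nonneg y)
    rwa [show |y| ^ 2 = y ^ 2 from sq_abs y] at this
  have hsplit : ((j + m : ℕ):ℝ) ^ (((j + m : ℕ):ℝ)/2) ≤
      (4:ℝ) ^ (j + m) * ((j:ℝ) ^ ((j:ℝ)/2) * (m:ℝ) ^ ((m:ℝ)/2)) := by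
    have := split_half j m
    calc ((j + m : ℕ):ℝ) ^ (((j + m : ℕ):ℝ)/2) ≤
        (4:ℝ) ^ (j + m) * (j:ℝ) ^ ((j:ℝ)/2) * (m:ℝ) ^ ((m:ℝ)/2) := this
      _ = (4:ℝ) ^ (j + m) * ((j:ℝ) ^ ((j:ℝ)/2) * (m:ℝ) ^ ((m:ℝ)/2)) := by ring
  have hjm : (0:ℝ) ≤ (j:ℝ) ^ ((j:ℝ)/2) * (m:ℝ) ^ ((m:ℝ)/2) :=
    mul_nonneg (Real.rpow_nonneg (Nat.cast_nonneg j) _) (Real.rpow_nonneg (Nat.cast_nonneg m) _)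
  have step2 : (|y| ^ (j + m) * E + (m:ℝ) ^ ((m:ℝ)/2) * (|y| ^ j * E)) ≤
      ((4:ℝ) ^ (j + m) + 1) * ((j:ℝ) ^ ((j:ℝ)/2) * (m:ℝ) ^ ((m:ℝ)/2)) := by
    have b1 : |y| ^ (j + m) * E ≤ (4:ℝ) ^ (j + m) * ((j:ℝ) ^ ((j:ℝ)/2) * (m:ℝ) ^ ((m:ℝ)/2)) :=
      hT1.trans hsplit
    have b2 : (m:ℝ) ^ ((m:ℝ)/2) * (|y| ^ j * E) ≤ (j:ℝ) ^ ((j:ℝ)/2) * (m:ℝ) ^ ((m:ℝ)/2) := by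
      have hmm0 : (0:ℝ) ≤ (m:ℝ) ^ ((m:ℝ)/2) := Real.rpow_nonneg (Nat.cast_nonneg m) _
      have := mul_le_mul_of_nonneg_left hT2 hmm0
      calc (m:ℝ) ^ ((m:ℝ)/2) * (|y| ^ j * E) ≤ (m:ℝ) ^ ((m:ℝ)/2) * (j:ℝ) ^ ((j:ℝ)/2) := this
        _ = (j:ℝ) ^ ((j:ℝ)/2) * (m:ℝ) ^ ((m:ℝ)/2) := by ring
    calc |y| ^ (j + m) * E + (m:ℝ) ^ ((m:ℝ)/2) * (|y| ^ j * E) ≤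
        (4:ℝ) ^ (j + m) * ((j:ℝ) ^ ((j:ℝ)/2) * (m:ℝ) ^ ((m:ℝ)/2)) +
          (j:ℝ) ^ ((j:ℝ)/2) * (m:ℝ) ^ ((m:ℝ)/2) := add_le_add b1 b2
      _ = ((4:ℝ) ^ (j + m) + 1) * ((j:ℝ) ^ ((j:ℝ)/2) * (m:ℝ) ^ ((m:ℝ)/2)) := by ring
  have step3 : (2:ℝ) ^ m * (2:ℝ) ^ m * ((4:ℝ) ^ (j + m) + 1) ≤ 2 * 16 ^ m * 4 ^ j := by
    have h41 : (1:ℝ) ≤ (4:ℝ) ^ (j + m) := one_le_pow₀ (by norm_num)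
    have e1 : (4:ℝ) ^ (j + m) = 4 ^ j * 4 ^ m := pow_add 4 j m
    have e2 : (2:ℝ) ^ m * (2:ℝ) ^ m * (4:ℝ) ^ m = 16 ^ m := by
      rw [← mul_pow, ← mul_pow]; norm_num
    have h2m : (0:ℝ) < (2:ℝ) ^ m := by positivity
    have h4j : (0:ℝ) < (4:ℝ) ^ j := by positivity
    have h4m : (0:ℝ) < (4:ℝ) ^ m := by positivity
    calc (2:ℝ) ^ m * (2:ℝ) ^ m * ((4:ℝ) ^ (j + m) + 1) ≤
        (2:ℝ) ^ m * (2:ℝ) ^ m * (2 * (4:ℝ) ^ (j + m)) := by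
          apply mul_le_mul_of_nonneg_left _ (by positivity)
          linarith
      _ = 2 * ((2:ℝ) ^ m * (2:ℝ) ^ m * (4:ℝ) ^ m) * 4 ^ j := by rw [e1]; ring
      _ = 2 * 16 ^ m * 4 ^ j := by rw [e2]
  calc |y| ^ j * (|Polynomial.aeval y (Polynomial.hermite m)| * E) ≤
      (2:ℝ) ^ m * (2:ℝ) ^ m * (|y| ^ (j + m) * E + (m:ℝ) ^ ((m:ℝ)/2) * (|y| ^ j * E)) := step1
    _ ≤ (2:ℝ) ^ m * (2:ℝ) ^ m * (((4:ℝ) ^ (j + m) + 1) *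
          ((j:ℝ) ^ ((j:ℝ)/2) * (m:ℝ) ^ ((m:ℝ)/2))) :=
        mul_le_mul_of_nonneg_left step2 (by positivity)
    _ = ((2:ℝ) ^ m * (2:ℝ) ^ m * ((4:ℝ) ^ (j + m) + 1)) *
          ((j:ℝ) ^ ((j:ℝ)/2) * (m:ℝ) ^ ((m:ℝ)/2)) := by ring
    _ ≤ (2 * 16 ^ m * 4 ^ j) * ((j:ℝ) ^ ((j:ℝ)/2) * (m:ℝ) ^ ((m:ℝ)/2)) :=
        mul_le_mul_of_nonneg_right step3 hjm

/-! ### the master estimate -/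

lemma master {ω : ℝ → ℝ} (hw : IsGenWeightFun ω) (ho : ω =o[atTop] fun t : ℝ => t ^ 2)
    {l : ℝ} (hl : 0 < l) :
    ∃ c : ℝ, 0 < c ∧ ∀ a : ℝ, 1 ≤ a → ∀ n m : ℕ, ∀ x : ℝ,
      |x ^ n * deriv^[m] (fun y => Real.exp (-((y - a) ^ 2 / 2))) x| ≤
        c * Real.exp ((1 / l) * ω (4 * a)) *
          Real.exp ((1 / l) * youngConj ω (l * ((n : ℝ) + (m : ℝ)))) := by
  obtain ⟨cab, hcab0, hcab⟩ :=
    absorb hw.mono hw.nonneg hw.gamma ho hl (show (1:ℝ) ≤ 16 by norm_num)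
  refine ⟨4 * cab ^ 2, by positivity, ?_⟩
  intro a ha n m x
  have ha0 : (0:ℝ) < a := lt_of_lt_of_le one_pos ha
  set y := x - a with hy
  set HH := |Polynomial.aeval y (Polynomial.hermite m)| with hHH
  set E := Real.exp (-(y ^ 2 / 2)) with hE
  have hE0 : (0:ℝ) < E := Real.exp_pos _
  have hHH0 : 0 ≤ HH := abs_nonneg _
  set F := 4 * cab ^ 2 * Real.exp ((1 / l) * ω (4 * a)) *
    Real.exp ((1 / l) * youngConj ω (l * ((n : ℝ) + (m : ℝ)))) with hF
  have hF0 : 0 ≤ F := by positivity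
  -- step 1
  have habs1 : |x ^ n * deriv^[m] (fun y => Real.exp (-((y - a) ^ 2 / 2))) x| ≤
      (|y| + a) ^ n * (HH * E) := by
    rw [abs_mul, abs_pow]
    have hD := gaussian_iterate_deriv_abs m a x
    apply mul_le_mul _ (le_of_eq hD) (abs_nonneg _) (by positivity)
    apply pow_le_pow_left₀ (abs_nonneg x)
    calc |x| = |y + a| := by rw [hy]; ring_nf
      _ ≤ |y| + |a| := abs_add_le _ _
      _ = |y| + a := by rw [abs_of_pos ha0]
  -- binomial expansion
  have hbin : (|y| + a) ^ n * (HH * E) =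
      ∑ j ∈ Finset.range (n + 1),
        (n.choose j : ℝ) * a ^ (n - j) * (|y| ^ j * (HH * E)) := by
    rw [add_pow, Finset.sum_mul]
    apply Finset.sum_congr rfl
    intro j hj
    ring
  -- per-term bound
  have key : ∀ j ∈ Finset.range (n + 1),
      (n.choose j : ℝ) * a ^ (n - j) * (|y| ^ j * (HH * E)) ≤
        (2:ℝ) ^ j * (F / 2 ^ (n + 1)) := by
    intro j hj
    have hjn : j ≤ n := Nat.lt_succ_iff.mp (Finset.mem_range.mp hj)
    have hpoint : |y| ^ j * (HH * E) ≤
        2 * 16 ^ m * 4 ^ j * ((j : ℝ) ^ ((j : ℝ)/2) * (m : ℝ) ^ ((m : ℝ)/2)) :=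
      point_bound j m y
    -- Young for (4a)^(n-j)
    have hlog : (0:ℝ) ≤ Real.log (4 * a) := by
      apply Real.log_nonneg; linarith
    have hyoung : ((n:ℝ) - j) * l * Real.log (4 * a) ≤
        youngConj ω (l * ((n - j : ℕ):ℝ)) + ω (4 * a) := by
      have := yc_young hw.nonneg hw.gamma
        (show (0:ℝ) ≤ l * ((n - j : ℕ):ℝ) by positivity) hlog
      rw [Real.exp_log (by linarith : (0:ℝ) < 4 * a)] at this
      have hcast : ((n - j : ℕ):ℝ) = (n:ℝ) - j := by
        push_cast [Nat.cast_sub hjn]; ring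
      rw [hcast] at this ⊢
      calc ((n:ℝ) - j) * l * Real.log (4 * a) = l * ((n:ℝ) - j) * Real.log (4 * a) := by ring
        _ ≤ youngConj ω (l * ((n:ℝ) - j)) + ω (4 * a) := this
    have hY : (4 * a) ^ (n - j) ≤
        Real.exp ((1/l) * youngConj ω (l * ((n - j : ℕ):ℝ))) * Real.exp ((1/l) * ω (4 * a)) := by
      have h4a : (0:ℝ) < 4 * a := by linarith
      have e1 : (4 * a) ^ (n - j) = Real.exp (((n - j : ℕ):ℝ) * Real.log (4 * a)) := by
        rw [← Real.log_pow, Real.exp_log (pow_pos h4a _)]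
      rw [e1, ← Real.exp_add]
      apply Real.exp_le_exp.mpr
      have hcast : ((n - j : ℕ):ℝ) = (n:ℝ) - j := by push_cast [Nat.cast_sub hjn]; ring
      rw [hcast]
      have hmul := mul_le_mul_of_nonneg_left hyoung (show (0:ℝ) ≤ 1/l by positivity)
      calc ((n:ℝ) - j) * Real.log (4 * a) = (1/l) * (((n:ℝ) - j) * l * Real.log (4 * a)) := by
            field_simp
        _ ≤ (1/l) * (youngConj ω (l * ((n:ℝ) - j)) + ω (4 * a)) := by
            rw [hcast] at hmul; exact hmul
        _ = 1/l * youngConj ω (l * ((n:ℝ) - j)) + 1/l * ω (4 * a) := by ring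
    -- absorb
    have hJ := hcab j
    have hM := hcab m
    -- superadditivity
    have hsup : youngConj ω (l * ((n - j : ℕ):ℝ)) + youngConj ω (l * j) + youngConj ω (l * m) ≤
        youngConj ω (l * ((n : ℝ) + (m : ℝ))) := by
      have hcast : ((n - j : ℕ):ℝ) = (n:ℝ) - j := by push_cast [Nat.cast_sub hjn]; ring
      have hjl : (0:ℝ) ≤ l * j := by positivity
      have hml : (0:ℝ) ≤ l * m := by positivity
      have hnjl : (0:ℝ) ≤ l * ((n - j : ℕ):ℝ) := by positivity
      have s1 : youngConj ω (l * ((n - j : ℕ):ℝ)) + youngConj ω (l * j) ≤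
          youngConj ω (l * ((n - j : ℕ):ℝ) + l * j) :=
        yc_superadd hw.nonneg hw.gamma hnjl hjl
      have e1 : l * ((n - j : ℕ):ℝ) + l * j = l * (n:ℝ) := by rw [hcast]; ring
      rw [e1] at s1
      have s2 : youngConj ω (l * (n:ℝ)) + youngConj ω (l * m) ≤
          youngConj ω (l * (n:ℝ) + l * m) :=
        yc_superadd hw.nonneg hw.gamma (by positivity) hml
      have e2 : l * (n:ℝ) + l * (m:ℝ) = l * ((n : ℝ) + (m : ℝ)) := by ring
      rw [e2] at s2
      linarith
    -- collect everything
    have hprod : (4 * a) ^ (n - j) * ((16:ℝ) ^ j * (j:ℝ) ^ ((j:ℝ)/2)) *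
        ((16:ℝ) ^ m * (m:ℝ) ^ ((m:ℝ)/2)) ≤
        cab ^ 2 * Real.exp ((1/l) * ω (4 * a)) *
          Real.exp ((1/l) * youngConj ω (l * ((n : ℝ) + (m : ℝ)))) := by
      have p1 : (0:ℝ) ≤ (4 * a) ^ (n - j) := by positivity
      have p2 : (0:ℝ) ≤ (16:ℝ) ^ j * (j:ℝ) ^ ((j:ℝ)/2) := by
        have := Real.rpow_nonneg (Nat.cast_nonneg (α := ℝ) j) ((j:ℝ)/2); positivity
      have p3 : (0:ℝ) ≤ (16:ℝ) ^ m * (m:ℝ) ^ ((m:ℝ)/2) := by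
        have := Real.rpow_nonneg (Nat.cast_nonneg (α := ℝ) m) ((m:ℝ)/2); positivity
      have q1 : (0:ℝ) ≤ Real.exp ((1/l) * youngConj ω (l * ((n - j : ℕ):ℝ))) *
          Real.exp ((1/l) * ω (4 * a)) := by positivity
      calc (4 * a) ^ (n - j) * ((16:ℝ) ^ j * (j:ℝ) ^ ((j:ℝ)/2)) *
          ((16:ℝ) ^ m * (m:ℝ) ^ ((m:ℝ)/2)) ≤
          (Real.exp ((1/l) * youngConj ω (l * ((n - j : ℕ):ℝ))) * Real.exp ((1/l) * ω (4 * a))) *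
            (cab * Real.exp ((1/l) * youngConj ω (l * j))) *
            (cab * Real.exp ((1/l) * youngConj ω (l * m))) := by
            apply mul_le_mul _ hM p3 (by positivity)
            exact mul_le_mul hY hJ p2 q1
        _ = cab ^ 2 * Real.exp ((1/l) * ω (4 * a)) *
            (Real.exp ((1/l) * youngConj ω (l * ((n - j : ℕ):ℝ))) *
              Real.exp ((1/l) * youngConj ω (l * j)) *
              Real.exp ((1/l) * youngConj ω (l * m))) := by ring
        _ ≤ cab ^ 2 * Real.exp ((1/l) * ω (4 * a)) *
            Real.exp ((1/l) * youngConj ω (l * ((n : ℝ) + (m : ℝ)))) := by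
            apply mul_le_mul_of_nonneg_left _ (by positivity)
            rw [← Real.exp_add, ← Real.exp_add]
            apply Real.exp_le_exp.mpr
            have hmul := mul_le_mul_of_nonneg_left hsup (show (0:ℝ) ≤ 1/l by positivity)
            calc (1/l) * youngConj ω (l * ((n - j : ℕ):ℝ)) +
                  (1/l) * youngConj ω (l * j) + (1/l) * youngConj ω (l * m) =
                (1/l) * (youngConj ω (l * ((n - j : ℕ):ℝ)) + youngConj ω (l * j) +
                  youngConj ω (l * m)) := by ring
              _ ≤ (1/l) * youngConj ω (l * ((n : ℝ) + (m : ℝ))) := hmul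
    -- scalar power arithmetic
    have hchoose : (n.choose j : ℝ) ≤ 2 ^ n := by
      have hcn : n.choose j ≤ 2 ^ n := by
        calc n.choose j ≤ ∑ i ∈ Finset.range (n+1), n.choose i :=
              Finset.single_le_sum (fun i _ => Nat.zero_le _)
                (Finset.mem_range.mpr (by omega))
          _ = 2 ^ n := Nat.sum_range_choose n
      exact_mod_cast hcn
    have hG0 : (0:ℝ) ≤ (j:ℝ) ^ ((j:ℝ)/2) := Real.rpow_nonneg (Nat.cast_nonneg j) _
    have hM0 : (0:ℝ) ≤ (m:ℝ) ^ ((m:ℝ)/2) := Real.rpow_nonneg (Nat.cast_nonneg m) _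
    have h2n1 : (0:ℝ) < 2 ^ (n+1) := by positivity
    rw [show (2:ℝ) ^ j * (F / 2 ^ (n+1)) = (2:ℝ) ^ j * F / 2 ^ (n+1) by ring,
      le_div_iff₀ h2n1]
    have up1 : (n.choose j : ℝ) * a ^ (n-j) * (|y| ^ j * (HH * E)) ≤
        2 ^ n * a ^ (n-j) *
          (2 * 16 ^ m * 4 ^ j * ((j:ℝ) ^ ((j:ℝ)/2) * (m:ℝ) ^ ((m:ℝ)/2))) := by
      apply mul_le_mul _ hpoint (by positivity) (by positivity)
      exact mul_le_mul_of_nonneg_right hchoose (by positivity)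
    have hscalar : (2:ℝ) ^ n * 2 * 4 ^ j * 2 ^ (n+1) ≤
        2 ^ j * 4 * ((4:ℝ) ^ (n-j) * 16 ^ j) := by
      have e0 : (4:ℝ) ^ (n-j) * 4 ^ j = 4 ^ n := by rw [← pow_add, Nat.sub_add_cancel hjn]
      have e1 : (16:ℝ) ^ j = 4 ^ j * 4 ^ j := by
        rw [show (16:ℝ) = 4 * 4 by norm_num, mul_pow]
      have e2 : (2:ℝ) ^ n * 2 * 2 ^ (n+1) = 4 ^ (n+1) := by
        rw [show (4:ℝ) = 2 * 2 by norm_num, mul_pow, ← pow_succ]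
      have h1j : (1:ℝ) ≤ 2 ^ j := one_le_pow₀ (by norm_num)
      calc (2:ℝ) ^ n * 2 * 4 ^ j * 2 ^ (n+1) = ((2:ℝ) ^ n * 2 * 2 ^ (n+1)) * 4 ^ j := by ring
        _ = 4 ^ (n+1) * 4 ^ j := by rw [e2]
        _ = 4 * ((4:ℝ) ^ (n-j) * 4 ^ j) * 4 ^ j := by rw [e0]; ring
        _ = 4 * ((4:ℝ) ^ (n-j) * 16 ^ j) := by rw [e1]; ring
        _ ≤ 2 ^ j * (4 * ((4:ℝ) ^ (n-j) * 16 ^ j)) :=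
            le_mul_of_one_le_left (by positivity) h1j
        _ = 2 ^ j * 4 * ((4:ℝ) ^ (n-j) * 16 ^ j) := by ring
    have hq0 : (0:ℝ) ≤ a ^ (n-j) * (16 ^ m * ((j:ℝ) ^ ((j:ℝ)/2) * (m:ℝ) ^ ((m:ℝ)/2))) := by
      positivity
    calc (n.choose j : ℝ) * a ^ (n-j) * (|y| ^ j * (HH * E)) * 2 ^ (n+1) ≤
        2 ^ n * a ^ (n-j) *
          (2 * 16 ^ m * 4 ^ j * ((j:ℝ) ^ ((j:ℝ)/2) * (m:ℝ) ^ ((m:ℝ)/2))) * 2 ^ (n+1) :=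
          mul_le_mul_of_nonneg_right up1 (by positivity)
      _ = ((2:ℝ) ^ n * 2 * 4 ^ j * 2 ^ (n+1)) *
          (a ^ (n-j) * (16 ^ m * ((j:ℝ) ^ ((j:ℝ)/2) * (m:ℝ) ^ ((m:ℝ)/2)))) := by ring
      _ ≤ (2 ^ j * 4 * ((4:ℝ) ^ (n-j) * 16 ^ j)) *
          (a ^ (n-j) * (16 ^ m * ((j:ℝ) ^ ((j:ℝ)/2) * (m:ℝ) ^ ((m:ℝ)/2)))) :=
          mul_le_mul_of_nonneg_right hscalar hq0
      _ = 2 ^ j * 4 * ((4 * a) ^ (n-j) * ((16:ℝ) ^ j * (j:ℝ) ^ ((j:ℝ)/2)) *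
          ((16:ℝ) ^ m * (m:ℝ) ^ ((m:ℝ)/2))) := by
          rw [mul_pow 4 a]; ring
      _ ≤ 2 ^ j * 4 * (cab ^ 2 * Real.exp ((1/l) * ω (4 * a)) *
          Real.exp ((1/l) * youngConj ω (l * ((n : ℝ) + (m : ℝ))))) :=
          mul_le_mul_of_nonneg_left hprod (by positivity)
      _ = (2:ℝ) ^ j * F := by rw [hF]; ring
  -- sum up
  calc |x ^ n * deriv^[m] (fun y => Real.exp (-((y - a) ^ 2 / 2))) x| ≤
      (|y| + a) ^ n * (HH * E) := habs1
    _ = ∑ j ∈ Finset.range (n + 1),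
        (n.choose j : ℝ) * a ^ (n - j) * (|y| ^ j * (HH * E)) := hbin
    _ ≤ ∑ j ∈ Finset.range (n + 1), (2:ℝ) ^ j * (F / 2 ^ (n+1)) := Finset.sum_le_sum key
    _ = (∑ j ∈ Finset.range (n + 1), (2:ℝ) ^ j) * (F / 2 ^ (n+1)) := by
        rw [← Finset.sum_mul]
    _ = (((2:ℝ) ^ (n+1) - 1)/(2 - 1)) * (F / 2 ^ (n+1)) := by
        rw [geom_sum_eq (by norm_num : (2:ℝ) ≠ 1)]
    _ ≤ F := by
        have h2n1 : (0:ℝ) < 2 ^ (n+1) := by positivity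
        have hdiv : (0:ℝ) ≤ F / 2 ^ (n+1) := by positivity
        have e3 : ((2:ℝ) ^ (n+1)) * (F / 2 ^ (n+1)) = F := by field_simp
        calc (((2:ℝ) ^ (n+1) - 1)/(2 - 1)) * (F / 2 ^ (n+1)) =
            ((2:ℝ) ^ (n+1) - 1) * (F / 2 ^ (n+1)) := by norm_num
          _ ≤ ((2:ℝ) ^ (n+1)) * (F / 2 ^ (n+1)) :=
              mul_le_mul_of_nonneg_right (by linarith) hdiv
          _ = F := e3

/-! ### dimension-one bridges -/

lemma mderiv_one (β : Fin 1 → ℕ) (f : (Fin 1 → ℝ) → ℝ) :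
    mderiv β f = (pderivOp 0)^[β 0] f := by
  have h : List.finRange 1 = [0] := rfl
  rw [mderiv, h, List.foldr_cons, List.foldr_nil]

lemma msize_one (α : Fin 1 → ℕ) : msize α = α 0 := by
  simp [msize]

lemma mpow_one (x : Fin 1 → ℝ) (α : Fin 1 → ℕ) : mpow x α = x 0 ^ α 0 := by
  simp [mpow]

lemma pderiv_comp (φ : ℝ → ℝ) (hφ : Differentiable ℝ φ) :
    pderivOp (0 : Fin 1) (fun x => φ (x 0)) = fun x => deriv φ (x 0) := by
  funext x
  have hproj : (fun x : Fin 1 → ℝ => φ (x 0)) =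
      φ ∘ (ContinuousLinearMap.proj (R := ℝ) (φ := fun _ : Fin 1 => ℝ) 0) := rfl
  rw [pderivOp, hproj]
  rw [fderiv_comp x (hφ.differentiableAt) ((ContinuousLinearMap.proj 0).differentiableAt)]
  rw [ContinuousLinearMap.fderiv]
  simp only [ContinuousLinearMap.coe_comp', Function.comp_apply,
    ContinuousLinearMap.proj_apply, Pi.single_eq_same]
  exact fderiv_apply_one_eq_deriv

lemma mderiv_comp (φ : ℝ → ℝ) (hφ : ContDiff ℝ (⊤ : ℕ∞) φ) (n : ℕ) :
    (pderivOp (0 : Fin 1))^[n] (fun x => φ (x 0)) = fun x => deriv^[n] φ (x 0) := by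
  induction n generalizing φ with
  | zero => simp
  | succ n ih =>
      have hd : ContDiff ℝ (⊤ : ℕ∞) (deriv φ) := by
        have hφ' : ContDiff ℝ (⊤ : ℕ∞) φ := by
          exact hφ
        exact (contDiff_infty_iff_deriv.mp hφ').2
      have hdiff : Differentiable ℝ φ := hφ.differentiable (by simp)
      rw [Function.iterate_succ_apply, pderiv_comp φ hdiff, ih (deriv φ) hd]
      funext x
      rw [Function.iterate_succ_apply]

lemma contdiff_comp_one (φ : ℝ → ℝ) (hφ : ContDiff ℝ (⊤ : ℕ∞) φ) :
    ContDiff ℝ (⊤ : ℕ∞) (fun x : Fin 1 → ℝ => φ (x 0)) :=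
  hφ.comp (ContinuousLinearMap.proj (R := ℝ) (φ := fun _ : Fin 1 => ℝ) 0).contDiff

/-! ### biconjugate -/

lemma biconj {σ : ℝ → ℝ} (hσ : IsGenWeightFun σ) {s : ℝ} (hs : 1 ≤ s) :
    ∃ n : ℕ, σ (Real.exp s) ≤ n * s + s - youngConj σ n := by
  have hs0 : (0:ℝ) < s := lt_of_lt_of_le one_pos hs
  set φ : ℝ → ℝ := fun t => σ (Real.exp t) with hφ
  have hmono : ∀ t1 t2 : ℝ, t1 ≤ t2 → φ t1 ≤ φ t2 := by
    intro t1 t2 h12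
    exact hσ.mono (Real.exp_pos t1).le (Real.exp_pos t2).le (Real.exp_le_exp.mpr h12)
  have hconv : ConvexOn ℝ (Set.Ici 0) φ := hσ.delta
  set S : Set ℝ := {q | ∃ r, r ∈ Set.Ioc s (s+1) ∧ q = (φ r - φ s) / (r - s)} with hS
  have hmem1 : (φ (s+1) - φ s) / ((s+1) - s) ∈ S := ⟨s+1, ⟨by linarith, le_rfl⟩, rfl⟩
  have hne : S.Nonempty := ⟨_, hmem1⟩
  have hSnonneg : ∀ q ∈ S, 0 ≤ q := by
    rintro q ⟨r, ⟨hr1, hr2⟩, rfl⟩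
    apply div_nonneg _ (by linarith)
    have := hmono s r (le_of_lt hr1)
    linarith
  have hbdd : BddBelow S := ⟨0, fun q hq => hSnonneg q hq⟩
  set u₀ : ℝ := sInf S with hu₀
  have hu00 : 0 ≤ u₀ := le_csInf hne hSnonneg
  -- supporting line
  have hsupp : ∀ t, 0 ≤ t → u₀ * t - φ t ≤ u₀ * s - φ s := by
    intro t ht
    rcases lt_trichotomy t s with hlt | heq | hgt
    · -- t < s
      have hslope : (φ s - φ t) / (s - t) ≤ u₀ := by
        apply le_csInf hne
        rintro q ⟨r, ⟨hr1, hr2⟩, rfl⟩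
        exact hconv.slope_mono_adjacent ht (by linarith : (0:ℝ) ≤ r) hlt hr1
      have hst : 0 < s - t := by linarith
      rw [div_le_iff₀ hst] at hslope
      nlinarith
    · exact le_of_eq (by rw [heq])
    · -- t > s
      have hu1 : u₀ ≤ (φ (s+1) - φ s) / ((s+1) - s) := csInf_le hbdd hmem1
      have hu1' : u₀ ≤ φ (s+1) - φ s := by
        have : ((s+1) - s) = (1:ℝ) := by ring
        rwa [this, div_one] at hu1
      rcases le_or_gt t (s+1) with hle | hgt2
      · have hmem : (φ t - φ s) / (t - s) ∈ S := ⟨t, ⟨hgt, hle⟩, rfl⟩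
        have := csInf_le hbdd hmem
        have hts : 0 < t - s := by linarith
        rw [le_div_iff₀ hts] at this
        nlinarith
      · -- t > s + 1
        have hadj : (φ (s+1) - φ s) / ((s+1) - s) ≤ (φ t - φ (s+1)) / (t - (s+1)) :=
          hconv.slope_mono_adjacent (by linarith : (0:ℝ) ≤ s) (by linarith : (0:ℝ) ≤ t)
            (by linarith) hgt2
        have h1 : ((s+1) - s) = (1:ℝ) := by ring
        rw [h1, div_one] at hadj
        have hts1 : 0 < t - (s+1) := by linarith
        rw [le_div_iff₀ hts1] at hadj
        -- φ t - φ (s+1) ≥ (φ(s+1) - φ s) * (t - s - 1)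
        have key : φ t - φ s ≥ (φ (s+1) - φ s) * (t - s) := by nlinarith
        have hts : 0 < t - s := by linarith
        nlinarith
  set n : ℕ := ⌊u₀⌋₊ with hn
  refine ⟨n, ?_⟩
  have hfl : (n:ℝ) ≤ u₀ := Nat.floor_le hu00
  have hfl2 : u₀ < (n:ℝ) + 1 := Nat.lt_floor_add_one u₀
  have h1 : youngConj σ (n:ℝ) ≤ u₀ * s - φ s := by
    apply yc_le
    intro t ht
    have h2 := hsupp t ht
    have h3 : (n:ℝ) * t ≤ u₀ * t := mul_le_mul_of_nonneg_right hfl ht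
    have : φ t = σ (Real.exp t) := rfl
    nlinarith
  have h4 : u₀ * s ≤ ((n:ℝ) + 1) * s := mul_le_mul_of_nonneg_right (le_of_lt hfl2) hs0.le
  have h5 : φ s = σ (Real.exp s) := rfl
  nlinarith

/-! ### main two directions -/

lemma forward {ω σ : ℝ → ℝ} (hω : IsGenWeightFun ω) (hσ : IsGenWeightFun σ)
    (hO : σ =O[atTop] ω) (d : ℕ) :
    SBeurlingW ω d ⊆ SBeurlingW σ d ∧ contIncBW ω σ d := by
  obtain ⟨A, B, hA, hB, hcmp⟩ := cmp_of_bigO hσ.mono hσ.nonneg hω.nonneg hO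
  have hA0 : (0:ℝ) < A := lt_of_lt_of_le one_pos hA
  have hkey : ∀ μ : ℝ, 0 < μ → ∀ k : ℕ,
      wWeight ω (μ/A) k ≤ Real.exp (B/μ) * wWeight σ μ k := by
    intro μ hμ k
    have h1 : youngConj ω ((μ/A) * k) ≤ (1/A) * youngConj σ (A * ((μ/A) * k)) + B/A :=
      yc_compare hσ.nonneg hσ.gamma hA hcmp (by positivity)
    have e1 : A * ((μ/A) * k) = μ * k := by field_simp
    rw [e1] at h1
    rw [wWeight, wWeight, ← Real.exp_add]
    apply Real.exp_le_exp.mpr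
    have h2 := mul_le_mul_of_nonneg_left h1 (show (0:ℝ) ≤ A/μ by positivity)
    have e2 : 1/(μ/A) = A/μ := by field_simp
    rw [e2]
    calc A/μ * youngConj ω (μ/A * (k:ℝ)) ≤ (A/μ) * ((1/A) * youngConj σ (μ * k) + B/A) := h2
      _ = B/μ + 1/μ * youngConj σ (μ * k) := by field_simp; ring
  constructor
  · rintro f ⟨hf1, hf2⟩
    refine ⟨hf1, ?_⟩
    intro l hl
    obtain ⟨C0, hC0, hCb⟩ := hf2 (l/A) (by positivity)
    refine ⟨C0 * Real.exp (B/l), by positivity, ?_⟩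
    intro α β x
    calc |mpow x α * mderiv β f x| ≤ C0 * wWeight ω (l/A) (msize α + msize β) := hCb α β x
      _ ≤ C0 * (Real.exp (B/l) * wWeight σ l (msize α + msize β)) :=
          mul_le_mul_of_nonneg_left (hkey l hl _) (le_of_lt hC0)
      _ = C0 * Real.exp (B/l) * wWeight σ l (msize α + msize β) := by ring
  · intro μ hμ
    refine ⟨μ/A, by positivity, Real.exp (B/μ), ?_, ?_⟩
    · rw [show (1:ℝ) = Real.exp 0 from (Real.exp_zero).symm]
      exact Real.exp_le_exp.mpr (by positivity)
    · intro f hf D hD hb α β x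
      calc |mpow x α * mderiv β f x| ≤ D * wWeight ω (μ/A) (msize α + msize β) := hb α β x
        _ ≤ D * (Real.exp (B/μ) * wWeight σ μ (msize α + msize β)) :=
            mul_le_mul_of_nonneg_left (hkey μ hμ _) hD
        _ = Real.exp (B/μ) * D * wWeight σ μ (msize α + msize β) := by ring

lemma converse {ω σ : ℝ → ℝ} (hω : IsWeightFun ω) (hσ : IsWeightFun σ)
    (hoω : ω =o[atTop] fun t : ℝ => t ^ 2) (hinc : contIncBW ω σ 1) :
    σ =O[atTop] ω := by
  obtain ⟨ν, hν, C, hC1, hC⟩ := hinc 1 one_pos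
  obtain ⟨c₀, hc₀, hmν⟩ := master hω.toIsGenWeightFun hoω hν
  obtain ⟨L, hL1, hLd⟩ := hω.alpha
  obtain ⟨T₀, hT₀⟩ := Filter.eventually_atTop.mp (hω.gamma.def one_pos)
  set K₁ : ℝ := 1 + L^2/ν with hK₁
  set K₂ : ℝ := Real.log C + Real.log c₀ + (L^2 + L)/ν with hK₂
  set A₀ : ℝ := max (max T₀ (Real.exp 1)) 1 with hA₀
  have main : ∀ a : ℝ, A₀ ≤ a → σ a ≤ K₁ * ω a + K₂ := by
    intro a ha
    have ha1 : (1:ℝ) ≤ a := le_trans (le_max_right _ _) ha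
    have ha0 : (0:ℝ) < a := lt_of_lt_of_le one_pos ha1
    have haT : T₀ ≤ a := le_trans (le_trans (le_max_left _ _) (le_max_left _ _)) ha
    have hae : Real.exp 1 ≤ a := le_trans (le_trans (le_max_right _ _) (le_max_left _ _)) ha
    set s : ℝ := Real.log a with hsdef
    have hs1 : (1:ℝ) ≤ s := (Real.le_log_iff_exp_le ha0).mpr hae
    have hexps : Real.exp s = a := Real.exp_log ha0
    -- the test function
    set φ : ℝ → ℝ := fun u => Real.exp (-((u - a) ^ 2 / 2)) with hφdef
    set f : (Fin 1 → ℝ) → ℝ := fun x => Real.exp (-((x 0 - a) ^ 2 / 2)) with hfdef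
    have hpoly : ContDiff ℝ (⊤ : ℕ∞) (fun u : ℝ => -((u - a) ^ 2 / 2)) :=
      (((contDiff_id.sub contDiff_const).pow 2).div_const 2).neg
    have hφcd : ContDiff ℝ (⊤ : ℕ∞) φ := Real.contDiff_exp.comp hpoly
    have hfcd : ContDiff ℝ (⊤ : ℕ∞) f := contdiff_comp_one φ hφcd
    -- bridge: master bound transfers to mderiv form
    have hbridge : ∀ l : ℝ, 0 < l → ∀ cl : ℝ,
        (∀ a' : ℝ, 1 ≤ a' → ∀ n m : ℕ, ∀ x' : ℝ,
          |x' ^ n * deriv^[m] (fun y => Real.exp (-((y - a') ^ 2 / 2))) x'| ≤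
            cl * Real.exp ((1 / l) * ω (4 * a')) *
              Real.exp ((1 / l) * youngConj ω (l * ((n : ℝ) + (m : ℝ))))) →
        ∀ α β : Fin 1 → ℕ, ∀ x : Fin 1 → ℝ,
          |mpow x α * mderiv β f x| ≤
            (cl * Real.exp ((1 / l) * ω (4 * a))) * wWeight ω l (msize α + msize β) := by
      intro l hl cl hml α β x
      have hb := hml a ha1 (α 0) (β 0) (x 0)
      have e1 : mderiv β f x = deriv^[β 0] φ (x 0) := by
        rw [mderiv_one]
        exact congrFun (mderiv_comp φ hφcd (β 0)) x
      have e2 : ((msize α + msize β : ℕ) : ℝ) = ((α 0 : ℝ) + (β 0 : ℝ)) := by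
        rw [msize_one, msize_one]; push_cast; ring
      rw [mpow_one, e1, wWeight, e2]
      calc |x 0 ^ α 0 * deriv^[β 0] φ (x 0)| ≤
          cl * Real.exp ((1 / l) * ω (4 * a)) *
            Real.exp ((1 / l) * youngConj ω (l * ((α 0 : ℝ) + (β 0 : ℝ)))) := hb
        _ = cl * Real.exp ((1 / l) * ω (4 * a)) *
            Real.exp (1 / l * youngConj ω (l * ((α 0 : ℝ) + (β 0 : ℝ)))) := by ring_nf
    -- membership
    have hmem : f ∈ SBeurlingW ω 1 := by
      refine ⟨hfcd, ?_⟩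
      intro l hl
      obtain ⟨cl, hcl, hml⟩ := master hω.toIsGenWeightFun hoω hl
      exact ⟨cl * Real.exp ((1 / l) * ω (4 * a)), by positivity, hbridge l hl cl hml⟩
    set D : ℝ := c₀ * Real.exp ((1 / ν) * ω (4 * a)) with hD
    have hD0 : (0:ℝ) < D := by positivity
    have hcon := hC f hmem D hD0.le (hbridge ν hν c₀ hmν)
    obtain ⟨n, hbic⟩ := biconj hσ.toIsGenWeightFun hs1
    have hfin := hcon (fun _ => n) 0 (fun _ => a)
    -- compute all the pieces in hfin
    have e3 : mpow (fun _ : Fin 1 => a) (fun _ : Fin 1 => n) = a ^ n := mpow_one _ _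
    have e4 : mderiv (0 : Fin 1 → ℕ) f (fun _ : Fin 1 => a) = 1 := by
      rw [mderiv_one]
      show f (fun _ => a) = 1
      rw [hfdef]
      norm_num
    have e5 : msize (fun _ : Fin 1 => n) = n := msize_one _
    have e6 : msize (0 : Fin 1 → ℕ) = 0 := msize_one _
    rw [e3, e4, e5, e6, mul_one] at hfin
    have e7 : wWeight σ 1 (n + 0) = Real.exp (youngConj σ (n : ℝ)) := by
      rw [wWeight]
      norm_num
    rw [e7] at hfin
    have habs : |a ^ n| = a ^ n := abs_of_pos (pow_pos ha0 n)
    rw [habs] at hfin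
    -- take logarithms
    have hCD0 : (0:ℝ) < C * D := mul_pos (lt_of_lt_of_le one_pos hC1) hD0
    have hpow : a ^ n = Real.exp ((n:ℝ) * s) := by
      rw [← Real.log_pow, Real.exp_log (pow_pos ha0 n)]
    have hlog : (n:ℝ) * s ≤ Real.log C + Real.log D + youngConj σ (n : ℝ) := by
      have h1 : Real.exp ((n:ℝ) * s) ≤ C * D * Real.exp (youngConj σ (n:ℝ)) := by
        rw [← hpow]; exact hfin
      have h2 := Real.log_le_log (Real.exp_pos _) h1
      rw [Real.log_exp, Real.log_mul (ne_of_gt hCD0) (ne_of_gt (Real.exp_pos _)),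
        Real.log_mul (ne_of_gt (lt_of_lt_of_le one_pos hC1)) (ne_of_gt hD0),
        Real.log_exp] at h2
      linarith
    have hlogD : Real.log D = Real.log c₀ + (1/ν) * ω (4 * a) := by
      rw [hD, Real.log_mul (ne_of_gt hc₀) (ne_of_gt (Real.exp_pos _)), Real.log_exp]
    -- doubling
    have hdou : ω (4 * a) ≤ L^2 * ω a + (L^2 + L) := by
      have h2a : ω (2 * a) ≤ L * (ω a + 1) := hLd a ha0.le
      have h4a : ω (2 * (2 * a)) ≤ L * (ω (2 * a) + 1) := hLd (2 * a) (by positivity)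
      have e8 : (4:ℝ) * a = 2 * (2 * a) := by ring
      rw [e8]
      nlinarith [hLd a ha0.le]
    -- s ≤ ω a
    have hsω : s ≤ ω a := by
      have := hT₀ a haT
      rw [Real.norm_eq_abs, Real.norm_eq_abs, one_mul,
        abs_of_nonneg (hω.nonneg a ha0.le)] at this
      calc s ≤ |s| := le_abs_self s
        _ ≤ ω a := this
    -- combine
    have hσa : σ a ≤ (n:ℝ) * s + s - youngConj σ (n:ℝ) := by
      rw [← hexps]; exact hbic
    have hν0 : (0:ℝ) < 1/ν := by positivity
    have hstep := mul_le_mul_of_nonneg_left hdou hν0.le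
    calc σ a ≤ (n:ℝ) * s + s - youngConj σ (n:ℝ) := hσa
      _ ≤ Real.log C + Real.log D + s := by linarith
      _ = Real.log C + Real.log c₀ + (1/ν) * ω (4 * a) + s := by rw [hlogD]; ring
      _ ≤ Real.log C + Real.log c₀ + (1/ν) * (L^2 * ω a + (L^2 + L)) + ω a := by
          linarith
      _ = K₁ * ω a + K₂ := by rw [hK₁, hK₂]; field_simp; ring
  -- convert to IsBigO
  have hω1 : ∀ a : ℝ, A₀ ≤ a → 1 ≤ ω a := by
    intro a ha
    have ha1 : (1:ℝ) ≤ a := le_trans (le_max_right _ _) ha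
    have ha0 : (0:ℝ) < a := lt_of_lt_of_le one_pos ha1
    have haT : T₀ ≤ a := le_trans (le_trans (le_max_left _ _) (le_max_left _ _)) ha
    have hae : Real.exp 1 ≤ a := le_trans (le_trans (le_max_right _ _) (le_max_left _ _)) ha
    have hs1 : (1:ℝ) ≤ Real.log a := (Real.le_log_iff_exp_le ha0).mpr hae
    have := hT₀ a haT
    rw [Real.norm_eq_abs, Real.norm_eq_abs, one_mul,
      abs_of_nonneg (hω.nonneg a ha0.le)] at this
    calc (1:ℝ) ≤ Real.log a := hs1
      _ ≤ |Real.log a| := le_abs_self _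
      _ ≤ ω a := this
  rw [Asymptotics.isBigO_iff]
  refine ⟨K₁ + max K₂ 0, Filter.eventually_atTop.mpr ⟨max A₀ 1, ?_⟩⟩
  intro a ha
  have haA : A₀ ≤ a := le_trans (le_max_left _ _) ha
  have ha0 : (0:ℝ) ≤ a := le_trans zero_le_one (le_trans (le_max_right _ _) ha)
  have h1 := main a haA
  have h2 := hω1 a haA
  have hK₁0 : 0 ≤ K₁ := by rw [hK₁]; positivity
  rw [Real.norm_eq_abs, Real.norm_eq_abs, abs_of_nonneg (hσ.nonneg a ha0),
    abs_of_nonneg (hω.nonneg a ha0)]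
  have h3 : K₂ ≤ max K₂ 0 := le_max_left _ _
  have h4 : max K₂ 0 ≤ max K₂ 0 * ω a := by
    nth_rewrite 1 [← mul_one (max K₂ 0)]
    exact mul_le_mul_of_nonneg_left h2 (le_max_right _ _)
  nlinarith [mul_le_mul_of_nonneg_left h2 hK₁0]

end GSAux

/-- Theorem `Gelfand-inclusionbeurling`: for weight functions `ω, σ` with
`ω(t) = o(t²)` and `σ(t) = o(t²)`, one has `σ(t) = O(ω(t))` iff
`S_(ω)(ℝ^d) ⊆ S_(σ)(ℝ^d)` with continuous inclusion for all `d`; the forward implication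
holds for general weight functions, the converse needs only `d = 1`. -/
theorem beurling_inclusion_characterization_weight_functions (ω σ : ℝ → ℝ) :
    ((IsGenWeightFun ω ∧ IsGenWeightFun σ ∧ σ =O[Filter.atTop] ω) →
      ∀ d : ℕ, 0 < d → SBeurlingW ω d ⊆ SBeurlingW σ d ∧ contIncBW ω σ d) ∧
    (IsWeightFun ω → IsWeightFun σ → (ω =o[Filter.atTop] fun t : ℝ => t ^ 2) →
      (σ =o[Filter.atTop] fun t : ℝ => t ^ 2) →
      ((σ =O[Filter.atTop] ω ↔
          ∀ d : ℕ, 0 < d → SBeurlingW ω d ⊆ SBeurlingW σ d ∧ contIncBW ω σ d) ∧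
        ((SBeurlingW ω 1 ⊆ SBeurlingW σ 1 ∧ contIncBW ω σ 1) → σ =O[Filter.atTop] ω))) := by
  constructor
  · rintro ⟨hω, hσ, hO⟩ d _
    exact GSAux.forward hω hσ hO d
  · intro hω hσ hoω hoσ
    refine ⟨⟨fun hO d _ => GSAux.forward hω.toIsGenWeightFun hσ.toIsGenWeightFun hO d,
      fun h => GSAux.converse hω hσ hoω (h 1 one_pos).2⟩, ?_⟩
    rintro ⟨h1, h2⟩
    exact GSAux.converse hω hσ hoω h2
end

section
/- Let 𝓜=(M^{(λ)})_{λ>0} and 𝓝=(N^{(λ)})_{λ>0} be weight matrices. If 𝓜◁𝓝, then S_{{𝓜}}(ℝ^d) ⊆ S_{(𝓝)}(ℝ^d) for every dimension d∈ℕ. Conversely, if 𝓜 and 𝓝 are standard log-convex, 𝓜 satisfies conditions (12L2R) and (M2')_R, 𝓝 satisfies conditions (12L2B) and (M2')_B, and S_{{𝓜}}(ℝ) ⊆ S_{(𝓝)}(ℝ) (dimension d=1), then 𝓜◁𝓝. -/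
open Filter Asymptotics

noncomputable section
namespace RBI

def gauss : ℝ → ℝ := fun x => Real.exp (-(x ^ 2) / 2)

lemma gauss_pos (x : ℝ) : 0 < gauss x := Real.exp_pos _

lemma gauss_zero : gauss 0 = 1 := by simp [gauss]

lemma gauss_contDiff : ContDiff ℝ (⊤ : ℕ∞) gauss := by
  have h1 : ContDiff ℝ (⊤ : ℕ∞) (fun x : ℝ => -(x ^ 2) / 2) :=
    ((contDiff_id.pow 2).neg).div_const 2
  exact Real.contDiff_exp.comp h1

lemma deriv_gauss : deriv gauss = fun x => -(x * gauss x) := by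
  funext x
  have h : HasDerivAt (fun x : ℝ => -(x ^ 2) / 2) (-x) x := by
    have h0 := ((hasDerivAt_pow 2 x).neg).div_const 2
    simp only [Nat.cast_ofNat, pow_one] at h0
    exact h0.congr_deriv (by norm_num; ring)
  have h2 : HasDerivAt gauss (Real.exp (-(x ^ 2) / 2) * (-x)) x :=
    (Real.hasDerivAt_exp _).comp x h
  rw [h2.deriv]; unfold gauss; ring

lemma gauss_contDiffInf : ContDiff ℝ ((⊤ : ℕ∞) : WithTop ℕ∞) gauss :=
  gauss_contDiff.of_le (by simp)

lemma gauss_iter_contDiff (n : ℕ) :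
    ContDiff ℝ ((⊤ : ℕ∞) : WithTop ℕ∞) (iteratedDeriv n gauss) := by
  rw [iteratedDeriv_eq_iterate]
  exact gauss_contDiffInf.iterate_deriv n

lemma gauss_iter_diff (n : ℕ) : Differentiable ℝ (iteratedDeriv n gauss) :=
  (gauss_iter_contDiff n).differentiable (by simp)

lemma deriv_iter_gauss (n : ℕ) : deriv (iteratedDeriv n gauss) = iteratedDeriv (n + 1) gauss :=
  (iteratedDeriv_succ).symm

/-- derivative of `y ↦ -(y * F y) - c * G y` -/
lemma deriv_aux (F G : ℝ → ℝ) (hF : Differentiable ℝ F) (hG : Differentiable ℝ G) (c x : ℝ) :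
    deriv (fun y => -(y * F y) - c * G y) x
      = -(F x + x * deriv F x) - c * deriv G x := by
  have ha : HasDerivAt (fun y : ℝ => y * F y) (1 * F x + x * deriv F x) x :=
    (hasDerivAt_id x).mul (hF x).hasDerivAt
  have hb : HasDerivAt (fun y : ℝ => c * G y) (c * deriv G x) x :=
    ((hG x).hasDerivAt).const_mul c
  rw [HasDerivAt.deriv (f := fun y => -(y * F y) - c * G y) (ha.neg.sub hb)]; ring

/-- Hermite recurrence for the Gaussian. -/
lemma gauss_rec (n : ℕ) : iteratedDeriv (n + 2) gauss
    = fun x => -(x * iteratedDeriv (n + 1) gauss x) - (n + 1 : ℝ) * iteratedDeriv n gauss x := by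
  induction n with
  | zero =>
    have h1 : iteratedDeriv 1 gauss = fun x => -(x * iteratedDeriv 0 gauss x) := by
      funext x; rw [iteratedDeriv_one, deriv_gauss]; simp [iteratedDeriv_zero]
    have h2 : iteratedDeriv 2 gauss = deriv (iteratedDeriv 1 gauss) := iteratedDeriv_succ
    funext x
    rw [h2, h1]
    have := deriv_aux (iteratedDeriv 0 gauss) (fun _ => 0) (gauss_iter_diff 0)
      (differentiable_const 0) 0 x
    simp only [mul_zero, zero_mul, sub_zero] at this ⊢
    rw [show (fun y => -(y * iteratedDeriv 0 gauss y)) = (fun y => -(y * iteratedDeriv 0 gauss y) - 0 * (fun _ : ℝ => (0:ℝ)) y) by funext y; ring_nf] at *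
    rw [this]
    rw [deriv_iter_gauss 0, h1]
    simp [iteratedDeriv_zero]
    ring
  | succ m ih =>
    funext x
    rw [show m + 1 + 2 = (m + 2) + 1 by ring, iteratedDeriv_succ, ih]
    rw [deriv_aux (iteratedDeriv (m+1) gauss) (iteratedDeriv m gauss)
      (gauss_iter_diff _) (gauss_iter_diff _) _ x]
    rw [deriv_iter_gauss, deriv_iter_gauss, ih]
    push_cast
    ring

end RBI

namespace RBI2

def Tb (s : ℕ) : ℝ := (s : ℝ) ^ ((s : ℝ) / 2)

lemma Tb_pos (s : ℕ) : 0 < Tb s := by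
  unfold Tb
  rcases Nat.eq_zero_or_pos s with h | h
  · subst h; simp
  · exact Real.rpow_pos_of_pos (by exact_mod_cast h) _

lemma Tb_sq (s : ℕ) : Tb s ^ 2 = (s : ℝ) ^ s := by
  unfold Tb
  rw [← Real.rpow_natCast ((s:ℝ) ^ ((s:ℝ)/2)) 2, ← Real.rpow_mul (Nat.cast_nonneg s)]
  rw [show ((s:ℝ)/2) * ((2:ℕ):ℝ) = (s:ℝ) by push_cast; ring]
  exact Real.rpow_natCast _ s

lemma pow_le_pow_mul_exp (u : ℝ) (hu : 0 ≤ u) (a : ℕ) : u ^ a ≤ (a : ℝ) ^ a * Real.exp u := by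
  rcases Nat.eq_zero_or_pos a with h | h
  · subst h; simpa using Real.one_le_exp hu
  · have ha : (0:ℝ) < a := by exact_mod_cast h
    have h1 : u / a ≤ Real.exp (u / a) :=
      le_trans (by linarith [Real.add_one_le_exp (u/a)]) (le_refl _)
    have h2 : (u / a) ^ a ≤ Real.exp (u / a) ^ a :=
      pow_le_pow_left₀ (by positivity) h1 a
    have h3 : Real.exp (u / a) ^ a = Real.exp u := by
      rw [← Real.exp_nat_mul, mul_div_cancel₀]
      exact ne_of_gt ha
    calc u ^ a = ((a : ℝ) * (u / a)) ^ a := by rw [mul_div_cancel₀]; exact ne_of_gt ha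
    _ = (a:ℝ) ^ a * (u / a) ^ a := mul_pow _ _ _
    _ ≤ (a:ℝ) ^ a * Real.exp u := by
        rw [← h3]; exact mul_le_mul_of_nonneg_left h2 (by positivity)

open RBI in
lemma gauss_weight_bound (a : ℕ) (x : ℝ) : |x| ^ a * gauss x ≤ Tb a := by
  have hg : 0 < gauss x := gauss_pos x
  have hsq : (|x| ^ a * gauss x) ^ 2 ≤ Tb a ^ 2 := by
    have ea : (|x| ^ a) ^ 2 = (x ^ 2) ^ a := by
      rw [← pow_mul, mul_comm a 2, pow_mul, sq_abs]
    have eb : gauss x ^ 2 = Real.exp (-(x ^ 2)) := by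
      unfold gauss
      rw [pow_two, ← Real.exp_add]
      congr 1; ring
    rw [Tb_sq, mul_pow, ea, eb]
    have h := pow_le_pow_mul_exp (x ^ 2) (sq_nonneg x) a
    calc (x^2)^a * Real.exp (-(x^2)) ≤ ((a:ℝ)^a * Real.exp (x^2)) * Real.exp (-(x^2)) :=
          mul_le_mul_of_nonneg_right h (Real.exp_nonneg _)
    _ = (a:ℝ)^a := by rw [mul_assoc, ← Real.exp_add]; simp
  have h1 : 0 ≤ |x| ^ a * gauss x := by positivity
  exact le_of_pow_le_pow_left₀ (by norm_num) (le_of_lt (Tb_pos a)) hsq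

lemma Tb_step (s : ℕ) : ((s : ℝ) + 1) * Tb s ≤ Tb (s + 2) := by
  unfold Tb
  have h0 : (0:ℝ) ≤ s := Nat.cast_nonneg s
  have h1 : (s:ℝ) ^ ((s:ℝ)/2) ≤ ((s:ℝ)+1) ^ ((s:ℝ)/2) :=
    Real.rpow_le_rpow h0 (by linarith) (by positivity)
  have h2 : ((s:ℝ)+1) * ((s:ℝ)+1) ^ ((s:ℝ)/2) = ((s:ℝ)+1) ^ (((s:ℝ)+2)/2) := by
    rw [show ((s:ℝ)+2)/2 = (s:ℝ)/2 + 1 by ring, Real.rpow_add (by linarith), Real.rpow_one]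
    ring
  have h3 : ((s:ℝ)+1) ^ (((s:ℝ)+2)/2) ≤ ((s:ℝ)+2) ^ (((s:ℝ)+2)/2) :=
    Real.rpow_le_rpow (by linarith) (by linarith) (by positivity)
  have hc : ((s + 2 : ℕ) : ℝ) = (s:ℝ) + 2 := by push_cast; ring
  rw [hc]
  calc ((s:ℝ)+1) * (s:ℝ) ^ ((s:ℝ)/2) ≤ ((s:ℝ)+1) * ((s:ℝ)+1) ^ ((s:ℝ)/2) :=
        mul_le_mul_of_nonneg_left h1 (by linarith)
  _ = ((s:ℝ)+1) ^ (((s:ℝ)+2)/2) := h2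
  _ ≤ ((s:ℝ)+2) ^ (((s:ℝ)+2)/2) := h3

open RBI in
/-- Main weighted bound for Gaussian derivatives. -/
lemma gauss_main_bound : ∀ b a : ℕ, ∀ x : ℝ,
    |x| ^ a * |iteratedDeriv b gauss x| ≤ 2 ^ b * Tb (a + b) := by
  intro b
  induction b using Nat.strong_induction_on with
  | _ b ih =>
    match b with
    | 0 =>
      intro a x
      simp only [iteratedDeriv_zero, pow_zero, one_mul, Nat.add_zero]
      rw [abs_of_pos (gauss_pos x)]
      exact gauss_weight_bound a x
    | 1 =>
      intro a x
      have h1 : iteratedDeriv 1 gauss x = -(x * gauss x) := by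
        rw [iteratedDeriv_one, deriv_gauss]
      rw [h1, abs_neg, abs_mul, abs_of_pos (gauss_pos x), ← mul_assoc, ← pow_succ]
      calc |x| ^ (a+1) * gauss x ≤ Tb (a+1) := gauss_weight_bound (a+1) x
      _ ≤ 2 ^ 1 * Tb (a + 1) := by nlinarith [Tb_pos (a+1)]
    | (n+2) =>
      intro a x
      have hrec := congrFun (gauss_rec n) x
      have h1 : |iteratedDeriv (n+2) gauss x|
          ≤ |x| * |iteratedDeriv (n+1) gauss x| + ((n:ℝ)+1) * |iteratedDeriv n gauss x| := by
        rw [hrec]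
        calc |(-(x * iteratedDeriv (n + 1) gauss x) - ((n:ℝ) + 1) * iteratedDeriv n gauss x)|
            ≤ |(-(x * iteratedDeriv (n + 1) gauss x))| + |((n:ℝ) + 1) * iteratedDeriv n gauss x| :=
              abs_sub _ _
        _ = |x| * |iteratedDeriv (n+1) gauss x| + ((n:ℝ)+1) * |iteratedDeriv n gauss x| := by
              rw [abs_neg, abs_mul, abs_mul, abs_of_pos (by positivity : (0:ℝ) < (n:ℝ)+1)]
      have h2 : |x| ^ a * |iteratedDeriv (n+2) gauss x|
          ≤ |x| ^ (a+1) * |iteratedDeriv (n+1) gauss x|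
            + ((n:ℝ)+1) * (|x| ^ a * |iteratedDeriv n gauss x|) := by
        have := mul_le_mul_of_nonneg_left h1 (pow_nonneg (abs_nonneg x) a)
        calc |x| ^ a * |iteratedDeriv (n+2) gauss x|
            ≤ |x| ^ a * (|x| * |iteratedDeriv (n+1) gauss x|
              + ((n:ℝ)+1) * |iteratedDeriv n gauss x|) := this
        _ = |x| ^ (a+1) * |iteratedDeriv (n+1) gauss x|
              + ((n:ℝ)+1) * (|x| ^ a * |iteratedDeriv n gauss x|) := by ring
      have ha1 : |x| ^ (a+1) * |iteratedDeriv (n+1) gauss x| ≤ 2^(n+1) * Tb (a+1+(n+1)) :=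
        ih (n+1) (by omega) (a+1) x
      have ha2 : |x| ^ a * |iteratedDeriv n gauss x| ≤ 2^n * Tb (a+n) :=
        ih n (by omega) a x
      have hstep : ((n:ℝ)+1) * Tb (a+n) ≤ Tb (a+n+2) := by
        calc ((n:ℝ)+1) * Tb (a+n) ≤ (((a+n : ℕ):ℝ)+1) * Tb (a+n) := by
              have : (n:ℝ) + 1 ≤ ((a+n:ℕ):ℝ) + 1 := by push_cast; linarith [Nat.cast_nonneg (α := ℝ) a]
              nlinarith [Tb_pos (a+n)]
        _ ≤ Tb (a+n+2) := Tb_step (a+n)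
      have e1 : a + 1 + (n + 1) = a + (n + 2) := by omega
      have e2 : a + n + 2 = a + (n + 2) := by omega
      have hn : (0:ℝ) ≤ (n:ℝ)+1 := by positivity
      have ha2' : ((n:ℝ)+1) * (|x| ^ a * |iteratedDeriv n gauss x|)
          ≤ 2^n * (((n:ℝ)+1) * Tb (a+n)) := by
        calc ((n:ℝ)+1) * (|x| ^ a * |iteratedDeriv n gauss x|)
            ≤ ((n:ℝ)+1) * (2^n * Tb (a+n)) := mul_le_mul_of_nonneg_left ha2 hn
        _ = 2^n * (((n:ℝ)+1) * Tb (a+n)) := by ring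
      have ha2'' : (2:ℝ)^n * (((n:ℝ)+1) * Tb (a+n)) ≤ 2^n * Tb (a+(n+2)) := by
        refine mul_le_mul_of_nonneg_left ?_ (by positivity)
        rw [← e2]; exact hstep
      have ha1' : |x| ^ (a+1) * |iteratedDeriv (n+1) gauss x| ≤ 2^(n+1) * Tb (a+(n+2)) := by
        rw [← e1]; exact ha1
      have hsum : (2:ℝ)^(n+1) * Tb (a+(n+2)) + 2^n * Tb (a+(n+2)) ≤ 2^(n+2) * Tb (a+(n+2)) := by
        have hpn : (0:ℝ) ≤ 2^n := by positivity
        have h4 : (2:ℝ)^(n+1) + 2^n ≤ 2^(n+2) := by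
          have e : (2:ℝ)^(n+2) = 2^n * 4 := by rw [pow_add]; norm_num
          have e' : (2:ℝ)^(n+1) = 2^n * 2 := by rw [pow_add]; norm_num
          rw [e, e']; nlinarith
        nlinarith [le_of_lt (Tb_pos (a+(n+2)))]
      linarith

end RBI2



noncomputable section
namespace RBI3

variable {M : ℕ → ℝ}

def mu (M : ℕ → ℝ) (p : ℕ) : ℝ := M (p + 1) / M p

lemma mu_succ_le (hM : IsLC M) (p : ℕ) : mu M p ≤ mu M (p + 1) := by
  unfold mu
  rw [div_le_div_iff₀ (hM.pos p) (hM.pos (p+1))]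
  have := hM.logConvex p
  nlinarith [hM.pos (p+1), hM.pos p, hM.pos (p+2)]

lemma mu_mono (hM : IsLC M) : Monotone (mu M) :=
  monotone_nat_of_le_succ (mu_succ_le hM)

lemma one_le_mu (hM : IsLC M) (p : ℕ) : 1 ≤ mu M p := by
  have h0 : mu M 0 = M 1 := by unfold mu; rw [hM.norm0, div_one]
  calc (1:ℝ) ≤ M 1 := hM.norm1
  _ = mu M 0 := h0.symm
  _ ≤ mu M p := mu_mono hM (Nat.zero_le p)

lemma mu_pos (hM : IsLC M) (p : ℕ) : 0 < mu M p := lt_of_lt_of_le one_pos (one_le_mu hM p)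

lemma M_mul_mu_pow_le (hM : IsLC M) (p : ℕ) : ∀ n : ℕ, M p * mu M p ^ n ≤ M (p + n) := by
  intro n
  induction n with
  | zero => simp
  | succ n ih =>
    have e : M (p + n) * mu M (p + n) = M (p + n + 1) := by
      unfold mu
      rw [mul_comm, div_mul_cancel₀ _ (ne_of_gt (hM.pos (p+n)))]
    calc M p * mu M p ^ (n + 1) = (M p * mu M p ^ n) * mu M p := by ring
    _ ≤ M (p + n) * mu M p := mul_le_mul_of_nonneg_right ih (le_of_lt (mu_pos hM p))
    _ ≤ M (p + n) * mu M (p + n) :=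
        mul_le_mul_of_nonneg_left (mu_mono hM (Nat.le_add_right p n)) (le_of_lt (hM.pos _))
    _ = M (p + (n + 1)) := by rw [e, Nat.add_assoc]

lemma le_M_mul_mu_pow (hM : IsLC M) (p : ℕ) : ∀ n : ℕ, n ≤ p → M p ≤ M (p - n) * mu M p ^ n := by
  intro n
  induction n with
  | zero => simp
  | succ n ih =>
    intro hn
    have hn' : n ≤ p := by omega
    have e : p - n = (p - (n + 1)) + 1 := by omega
    have e2 : M (p - n) = M (p - (n+1)) * mu M (p - (n+1)) := by
      rw [e]; unfold mu
      rw [mul_comm, div_mul_cancel₀ _ (ne_of_gt (hM.pos (p - (n+1))))]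
    calc M p ≤ M (p - n) * mu M p ^ n := ih hn'
    _ = M (p - (n+1)) * mu M (p - (n+1)) * mu M p ^ n := by rw [e2]
    _ ≤ M (p - (n+1)) * mu M p * mu M p ^ n := by
        refine mul_le_mul_of_nonneg_right ?_ (pow_nonneg (le_of_lt (mu_pos hM p)) n)
        exact mul_le_mul_of_nonneg_left (mu_mono hM (by omega)) (le_of_lt (hM.pos _))
    _ = M (p - (n+1)) * mu M p ^ (n+1) := by ring

/-- two-sided key inequality -/
lemma weight_key (hM : IsLC M) (p k : ℕ) : M p * mu M p ^ k ≤ M k * mu M p ^ p := by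
  rcases le_or_gt p k with h | h
  · obtain ⟨n, rfl⟩ := Nat.exists_eq_add_of_le h
    calc M p * mu M p ^ (p + n) = (M p * mu M p ^ n) * mu M p ^ p := by ring
    _ ≤ M (p + n) * mu M p ^ p :=
        mul_le_mul_of_nonneg_right (M_mul_mu_pow_le hM p n) (pow_nonneg (le_of_lt (mu_pos hM p)) p)
  · have hk : p - (p - k) = k := by omega
    have h1 := le_M_mul_mu_pow hM p (p - k) (by omega)
    rw [hk] at h1
    calc M p * mu M p ^ k ≤ (M k * mu M p ^ (p - k)) * mu M p ^ k :=
        mul_le_mul_of_nonneg_right h1 (pow_nonneg (le_of_lt (mu_pos hM p)) k)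
    _ = M k * mu M p ^ (p - k + k) := by rw [pow_add]; ring
    _ = M k * mu M p ^ p := by
        have e : p - k + k = p := by omega
        rw [e]

/-- the coefficient bound used for the series -/
lemma coeff_bound (hM : IsLC M) (p k : ℕ) :
    (M p / (4 ^ p * mu M p ^ p)) * mu M p ^ k ≤ M k * (4:ℝ)⁻¹ ^ p := by
  have hmu : (0:ℝ) < mu M p ^ p := pow_pos (mu_pos hM p) p
  have hpos : (0:ℝ) < 4 ^ p * mu M p ^ p := by positivity
  rw [div_mul_eq_mul_div, div_le_iff₀ hpos]
  have h14 : ((4:ℝ)⁻¹)^p * (4:ℝ)^p = 1 := by rw [← mul_pow]; norm_num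
  calc M p * mu M p ^ k ≤ M k * mu M p ^ p := weight_key hM p k
  _ = M k * (((4:ℝ)⁻¹)^p * (4:ℝ)^p) * mu M p ^ p := by rw [h14, mul_one]
  _ = M k * (4:ℝ)⁻¹ ^ p * (4 ^ p * mu M p ^ p) := by ring

end RBI3

section D
open RBI RBI2 RBI3

noncomputable section
namespace RBI4

variable (Mlo : ℕ → ℝ) (φ : ℕ → ℕ)

def tj (j : ℕ) : ℝ := RBI3.mu Mlo (φ j)
def bj (j : ℕ) : ℝ := Mlo (φ j) / (4 ^ (φ j) * tj Mlo φ j ^ (φ j))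
def u (j : ℕ) : ℝ → ℝ := fun x => bj Mlo φ j * RBI.gauss (x - tj Mlo φ j)
def fser : ℝ → ℝ := fun x => ∑' j, u Mlo φ j x
def vb (n j : ℕ) : ℝ := ((2:ℝ) ^ n * RBI2.Tb n) * ((4:ℝ)⁻¹) ^ (φ j)

variable {Mlo φ}

lemma tj_pos (hLC : IsLC Mlo) (j : ℕ) : 0 < tj Mlo φ j := mu_pos hLC _
lemma one_le_tj (hLC : IsLC Mlo) (j : ℕ) : 1 ≤ tj Mlo φ j := one_le_mu hLC _
lemma bj_pos (hLC : IsLC Mlo) (j : ℕ) : 0 < bj Mlo φ j := by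
  unfold bj
  have h1 := tj_pos hLC (φ := φ) j
  have h2 := hLC.pos (φ j)
  positivity

lemma bt_bound (hLC : IsLC Mlo) (j k : ℕ) : bj Mlo φ j * tj Mlo φ j ^ k ≤ Mlo k * (4:ℝ)⁻¹ ^ (φ j) :=
  coeff_bound hLC (φ j) k

lemma bj_le (hLC : IsLC Mlo) (j : ℕ) : bj Mlo φ j ≤ (4:ℝ)⁻¹ ^ (φ j) := by
  have h := bt_bound hLC (φ := φ) j 0
  simpa [hLC.norm0] using h

lemma quarter_le (hφ : StrictMono φ) (j : ℕ) : ((4:ℝ)⁻¹) ^ (φ j) ≤ ((4:ℝ)⁻¹) ^ j :=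
  pow_le_pow_of_le_one (by norm_num) (by norm_num) (hφ.le_apply)

lemma sum_quarter (hφ : StrictMono φ) : Summable (fun j : ℕ => ((4:ℝ)⁻¹) ^ (φ j)) := by
  refine Summable.of_nonneg_of_le (fun j => by positivity) (quarter_le hφ) ?_
  exact summable_geometric_of_lt_one (by norm_num) (by norm_num)

lemma tsum_quarter_le (hφ : StrictMono φ) : (∑' j : ℕ, ((4:ℝ)⁻¹) ^ (φ j)) ≤ 2 := by
  have h1 : (∑' j : ℕ, ((4:ℝ)⁻¹) ^ (φ j)) ≤ ∑' j : ℕ, ((4:ℝ)⁻¹) ^ j := by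
    refine Summable.tsum_le_tsum (quarter_le hφ) (sum_quarter hφ) ?_
    exact summable_geometric_of_lt_one (by norm_num) (by norm_num)
  have h2 : (∑' j : ℕ, ((4:ℝ)⁻¹) ^ j) = (1 - (4:ℝ)⁻¹)⁻¹ :=
    tsum_geometric_of_lt_one (by norm_num) (by norm_num)
  rw [h2] at h1
  calc (∑' j : ℕ, ((4:ℝ)⁻¹) ^ (φ j)) ≤ (1 - (4:ℝ)⁻¹)⁻¹ := h1
  _ ≤ 2 := by norm_num

lemma sum_bt (hLC : IsLC Mlo) (hφ : StrictMono φ) (k : ℕ) : Summable (fun j => bj Mlo φ j * tj Mlo φ j ^ k) := by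
  refine Summable.of_nonneg_of_le (fun j => ?_) (fun j => bt_bound hLC j k) ?_
  · have h1 := bj_pos hLC (φ := φ) j
    have h2 := tj_pos hLC (φ := φ) j
    positivity
  · exact (sum_quarter hφ).mul_left (Mlo k)

lemma tsum_bt_le (hLC : IsLC Mlo) (hφ : StrictMono φ) (k : ℕ) : (∑' j, bj Mlo φ j * tj Mlo φ j ^ k) ≤ 2 * Mlo k := by
  have h1 : (∑' j, bj Mlo φ j * tj Mlo φ j ^ k) ≤ ∑' j : ℕ, Mlo k * ((4:ℝ)⁻¹) ^ (φ j) :=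
    Summable.tsum_le_tsum (fun j => bt_bound hLC j k) (sum_bt hLC hφ k) ((sum_quarter hφ).mul_left (Mlo k))
  rw [tsum_mul_left] at h1
  have h2 := tsum_quarter_le hφ
  have h3 : 0 ≤ Mlo k := le_of_lt (hLC.pos k)
  nlinarith

lemma sum_b (hLC : IsLC Mlo) (hφ : StrictMono φ) : Summable (fun j => bj Mlo φ j) := by
  have h := sum_bt hLC hφ 0
  simpa using h

lemma tsum_b_le (hLC : IsLC Mlo) (hφ : StrictMono φ) : (∑' j, bj Mlo φ j) ≤ 2 := by
  have h := tsum_bt_le hLC hφ 0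
  rw [hLC.norm0] at h
  simpa using h

/-- translates of iterated derivatives -/
lemma iter_shift (c : ℝ) : ∀ (n : ℕ) (g : ℝ → ℝ),
    iteratedDeriv n (fun x => g (x - c)) = fun x => iteratedDeriv n g (x - c) := by
  intro n
  induction n with
  | zero => intro g; simp [iteratedDeriv_zero]
  | succ n ih =>
    intro g
    rw [iteratedDeriv_succ']
    have e : deriv (fun x => g (x - c)) = fun x => deriv g (x - c) :=
      funext (fun x => deriv_comp_sub_const g c x)
    rw [e, ih (deriv g), ← iteratedDeriv_succ']

lemma u_contDiff (j : ℕ) : ContDiff ℝ ((⊤ : ℕ∞) : WithTop ℕ∞) (u Mlo φ j) :=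
  contDiff_const.mul (gauss_contDiffInf.comp (contDiff_id.sub contDiff_const))

lemma iter_const_mul (c : ℝ) : ∀ (n : ℕ) (g : ℝ → ℝ), Differentiable ℝ g →
    (∀ m : ℕ, Differentiable ℝ (iteratedDeriv m g)) →
    iteratedDeriv n (fun x => c * g x) = fun x => c * iteratedDeriv n g x := by
  intro n
  induction n with
  | zero => intro g _ _; simp [iteratedDeriv_zero]
  | succ n ih =>
    intro g hg hg'
    rw [iteratedDeriv_succ']
    have e : deriv (fun x => c * g x) = fun x => c * deriv g x := by
      funext x
      exact deriv_const_mul c (hg x)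
    rw [e]
    have hd1 : Differentiable ℝ (deriv g) := by
      have := hg' 1; rwa [iteratedDeriv_one] at this
    have hd2 : ∀ m : ℕ, Differentiable ℝ (iteratedDeriv m (deriv g)) := by
      intro m; have := hg' (m + 1); rwa [iteratedDeriv_succ'] at this
    rw [ih (deriv g) hd1 hd2]
    funext x
    rw [iteratedDeriv_succ']

lemma gshift_iter_diff (t : ℝ) (m : ℕ) :
    Differentiable ℝ (iteratedDeriv m (fun x : ℝ => gauss (x - t))) := by
  rw [iter_shift t m gauss]
  exact (gauss_iter_diff m).comp (differentiable_id.sub (differentiable_const t))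

lemma iter_u (j n : ℕ) (x : ℝ) :
    iteratedDeriv n (u Mlo φ j) x = bj Mlo φ j * iteratedDeriv n gauss (x - tj Mlo φ j) := by
  have e : u Mlo φ j = fun z => bj Mlo φ j * gauss (z - tj Mlo φ j) := rfl
  have hdiff : Differentiable ℝ (fun x : ℝ => gauss (x - tj Mlo φ j)) := by
    have := gshift_iter_diff (tj Mlo φ j) 0
    simpa [iteratedDeriv_zero] using this
  rw [e, iter_const_mul (bj Mlo φ j) n _ hdiff (gshift_iter_diff (tj Mlo φ j))]
  simp [iter_shift (tj Mlo φ j) n gauss]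

lemma u_iter_bound (hLC : IsLC Mlo) (n j : ℕ) (x : ℝ) :
    |iteratedDeriv n (u Mlo φ j) x| ≤ vb φ n j := by
  rw [iter_u j n x, abs_mul, abs_of_pos (bj_pos hLC j)]
  have h1 : |iteratedDeriv n gauss (x - tj Mlo φ j)| ≤ 2 ^ n * Tb n := by
    have := gauss_main_bound n 0 (x - tj Mlo φ j)
    simpa using this
  have h2 := bj_le hLC (φ := φ) j
  unfold vb
  have hb := bj_pos hLC (φ := φ) j
  have habs : (0:ℝ) ≤ |iteratedDeriv n gauss (x - tj Mlo φ j)| := abs_nonneg _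
  calc bj Mlo φ j * |iteratedDeriv n gauss (x - tj Mlo φ j)|
      ≤ bj Mlo φ j * (2 ^ n * Tb n) := mul_le_mul_of_nonneg_left h1 (le_of_lt hb)
  _ ≤ ((4:ℝ)⁻¹) ^ (φ j) * (2 ^ n * Tb n) := by
      refine mul_le_mul_of_nonneg_right h2 ?_
      have := Tb_pos n
      positivity
  _ = (2 ^ n * Tb n) * ((4:ℝ)⁻¹) ^ (φ j) := by ring

lemma u_fderiv_bound (hLC : IsLC Mlo) (n j : ℕ) (x : ℝ) :
    ‖iteratedFDeriv ℝ n (u Mlo φ j) x‖ ≤ vb φ n j := by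
  rw [norm_iteratedFDeriv_eq_norm_iteratedDeriv, Real.norm_eq_abs]
  exact u_iter_bound hLC n j x

lemma sum_vb (hφ : StrictMono φ) (n : ℕ) : Summable (vb φ n) := by
  unfold vb
  exact (sum_quarter hφ).mul_left _

lemma sum_iter_u (hLC : IsLC Mlo) (hφ : StrictMono φ) (n : ℕ) (x : ℝ) : Summable (fun j => iteratedDeriv n (u Mlo φ j) x) := by
  refine Summable.of_norm_bounded (sum_vb hφ n) (fun j => ?_)
  rw [Real.norm_eq_abs]
  exact u_iter_bound hLC n j x

lemma sum_u (hLC : IsLC Mlo) (hφ : StrictMono φ) (x : ℝ) : Summable (fun j => u Mlo φ j x) := by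
  have h := sum_iter_u hLC hφ 0 x
  simpa [iteratedDeriv_zero] using h

/-- interchange of sum and iterated derivative -/
lemma interchange (hLC : IsLC Mlo) (hφ : StrictMono φ) (n : ℕ) (x : ℝ) :
    iteratedDeriv n (fser Mlo φ) x = ∑' j, iteratedDeriv n (u Mlo φ j) x := by
  have hf : ∀ j : ℕ, ContDiff ℝ ((⊤:ℕ∞) : WithTop ℕ∞) (u Mlo φ j) := u_contDiff
  have hv : ∀ k : ℕ, (k : ℕ∞) ≤ (⊤:ℕ∞) → Summable (vb φ k) := fun k _ => sum_vb hφ k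
  have h'f : ∀ (k : ℕ) (j : ℕ) (x : ℝ), (k : ℕ∞) ≤ (⊤:ℕ∞) →
      ‖iteratedFDeriv ℝ k (u Mlo φ j) x‖ ≤ vb φ k j := fun k j x _ => u_fderiv_bound hLC k j x
  have hiF := iteratedFDeriv_tsum_apply (𝕜 := ℝ) (N := (⊤:ℕ∞)) (k := n) hf hv h'f le_top x
  have hsum : Summable (fun j => iteratedFDeriv ℝ n (u Mlo φ j) x) := by
    refine Summable.of_norm_bounded (sum_vb hφ n) (fun j => u_fderiv_bound hLC n j x)
  have happ := (ContinuousMultilinearMap.apply ℝ (fun _ : Fin n => ℝ) ℝ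
    (fun _ => (1:ℝ))).map_tsum hsum
  calc iteratedDeriv n (fser Mlo φ) x
      = (iteratedFDeriv ℝ n (fser Mlo φ) x : (Fin n → ℝ) → ℝ) (fun _ => 1) :=
        iteratedDeriv_eq_iteratedFDeriv
  _ = ((∑' j, iteratedFDeriv ℝ n (u Mlo φ j) x) : ContinuousMultilinearMap ℝ (fun _ : Fin n => ℝ) ℝ) (fun _ => 1) := by
        rw [show fser Mlo φ = (fun y => ∑' j, u Mlo φ j y) from rfl, hiF]
  _ = ∑' j, (iteratedFDeriv ℝ n (u Mlo φ j) x : (Fin n → ℝ) → ℝ) (fun _ => 1) := happ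
  _ = ∑' j, iteratedDeriv n (u Mlo φ j) x := by
        refine tsum_congr (fun j => ?_)
        exact (iteratedDeriv_eq_iteratedFDeriv).symm

lemma two_split (a : ℕ) (c d : ℝ) (hc : 0 ≤ c) (hd : 0 ≤ d) :
    (c + d) ^ a ≤ 2 ^ a * (c ^ a + d ^ a) := by
  have h1 : c + d ≤ 2 * max c d := by
    rcases le_total c d with h | h
    · rw [max_eq_right h]; linarith
    · rw [max_eq_left h]; linarith
  calc (c + d) ^ a ≤ (2 * max c d) ^ a := pow_le_pow_left₀ (by linarith) h1 a
  _ = 2 ^ a * (max c d) ^ a := mul_pow _ _ _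
  _ ≤ 2 ^ a * (c ^ a + d ^ a) := by
      refine mul_le_mul_of_nonneg_left ?_ (by positivity)
      rcases le_total c d with h | h
      · rw [max_eq_right h]; nlinarith [pow_nonneg hc a]
      · rw [max_eq_left h]; nlinarith [pow_nonneg hd a]

lemma absx_split (a : ℕ) (x t : ℝ) (ht : 0 ≤ t) :
    |x| ^ a ≤ 2 ^ a * (|x - t| ^ a + t ^ a) := by
  have h1 : |x| ≤ |x - t| + t := by
    have e : x = (x - t) + t := by ring
    calc |x| = |(x - t) + t| := by rw [← e]
    _ ≤ |x - t| + |t| := abs_add_le _ _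
    _ = |x - t| + t := by rw [abs_of_nonneg ht]
  calc |x| ^ a ≤ (|x - t| + t) ^ a := pow_le_pow_left₀ (abs_nonneg x) h1 a
  _ ≤ 2 ^ a * (|x - t| ^ a + t ^ a) := two_split a _ _ (abs_nonneg _) ht

lemma membership (hLC : IsLC Mlo) (hφ : StrictMono φ) (Mk : ℕ → ℝ) (hMk : ∀ p, 0 < Mk p)
    (B C H : ℝ) (hB : 0 < B) (hC : 0 < C) (hH : 0 < H)
    (h12 : ∀ p q : ℕ, (p:ℝ) ^ ((p:ℝ) / 2) * Mlo q ≤ B * C ^ p * H ^ (p + q) * Mk (p + q))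
    (a b : ℕ) (x : ℝ) :
    |x| ^ a * |iteratedDeriv b (fser Mlo φ) x|
      ≤ (4 * B) * (2 * max C 1 * H) ^ (a + b) * Mk (a + b) := by
  set w : ℕ → ℝ := fun j => 2 ^ (a+b) * Tb (a+b) * bj Mlo φ j
    + 2 ^ (a+b) * Tb b * (bj Mlo φ j * tj Mlo φ j ^ a) with hw
  have hsum_w : Summable w := by
    apply Summable.add
    · exact ((sum_b hLC hφ).mul_left _)
    · exact ((sum_bt hLC hφ a).mul_left _)
  have hpt : ∀ j, |x| ^ a * |iteratedDeriv b (u Mlo φ j) x| ≤ w j := by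
    intro j
    have htj := tj_pos hLC (φ := φ) j
    have hbj := bj_pos hLC (φ := φ) j
    rw [iter_u j b x, abs_mul, abs_of_pos hbj]
    have h1 : |x| ^ a ≤ 2 ^ a * (|x - tj Mlo φ j| ^ a + tj Mlo φ j ^ a) :=
      absx_split a x _ (le_of_lt htj)
    have h2 : |x - tj Mlo φ j| ^ a * |iteratedDeriv b gauss (x - tj Mlo φ j)|
        ≤ 2 ^ b * Tb (a + b) := gauss_main_bound b a (x - tj Mlo φ j)
    have h3 : |iteratedDeriv b gauss (x - tj Mlo φ j)| ≤ 2 ^ b * Tb b := by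
      have := gauss_main_bound b 0 (x - tj Mlo φ j)
      simpa using this
    calc |x| ^ a * (bj Mlo φ j * |iteratedDeriv b gauss (x - tj Mlo φ j)|)
        ≤ (2 ^ a * (|x - tj Mlo φ j| ^ a + tj Mlo φ j ^ a))
            * (bj Mlo φ j * |iteratedDeriv b gauss (x - tj Mlo φ j)|) := by
          refine mul_le_mul_of_nonneg_right h1 ?_
          positivity
    _ = 2 ^ a * bj Mlo φ j * (|x - tj Mlo φ j| ^ a * |iteratedDeriv b gauss (x - tj Mlo φ j)|)
          + 2 ^ a * (bj Mlo φ j * tj Mlo φ j ^ a) * |iteratedDeriv b gauss (x - tj Mlo φ j)| := by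
          ring
    _ ≤ 2 ^ a * bj Mlo φ j * (2 ^ b * Tb (a+b))
          + 2 ^ a * (bj Mlo φ j * tj Mlo φ j ^ a) * (2 ^ b * Tb b) := by
          have t1 : (0:ℝ) ≤ 2 ^ a * bj Mlo φ j := by positivity
          have t2 : (0:ℝ) ≤ 2 ^ a * (bj Mlo φ j * tj Mlo φ j ^ a) := by positivity
          exact add_le_add (mul_le_mul_of_nonneg_left h2 t1) (mul_le_mul_of_nonneg_left h3 t2)
    _ = w j := by rw [hw]; simp only [pow_add]; ring
  have hsum_abs : Summable (fun j => |iteratedDeriv b (u Mlo φ j) x|) := by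
    refine Summable.of_nonneg_of_le (fun j => abs_nonneg _) (fun j => u_iter_bound hLC b j x)
      (sum_vb hφ b)
  have s1 : |iteratedDeriv b (fser Mlo φ) x| ≤ ∑' j, |iteratedDeriv b (u Mlo φ j) x| := by
    rw [interchange hLC hφ b x]
    have := norm_tsum_le_tsum_norm (f := fun j => iteratedDeriv b (u Mlo φ j) x)
      (by simpa [Real.norm_eq_abs] using hsum_abs)
    simpa [Real.norm_eq_abs] using this
  have s2 : |x| ^ a * |iteratedDeriv b (fser Mlo φ) x| ≤ ∑' j, w j := by
    have hx : (0:ℝ) ≤ |x| ^ a := by positivity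
    calc |x| ^ a * |iteratedDeriv b (fser Mlo φ) x|
        ≤ |x| ^ a * ∑' j, |iteratedDeriv b (u Mlo φ j) x| := mul_le_mul_of_nonneg_left s1 hx
    _ = ∑' j, |x| ^ a * |iteratedDeriv b (u Mlo φ j) x| := by rw [tsum_mul_left]
    _ ≤ ∑' j, w j := by
        refine Summable.tsum_le_tsum hpt ?_ hsum_w
        exact hsum_abs.mul_left _
  have s3 : (∑' j, w j) ≤ 2 ^ (a+b) * Tb (a+b) * 2 + 2 ^ (a+b) * Tb b * (2 * Mlo a) := by
    rw [hw, Summable.tsum_add ((sum_b hLC hφ).mul_left _) ((sum_bt hLC hφ a).mul_left _),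
      tsum_mul_left, tsum_mul_left]
    have t1 : (0:ℝ) ≤ 2 ^ (a+b) * Tb (a+b) := mul_nonneg (by positivity) (le_of_lt (Tb_pos _))
    have t2 : (0:ℝ) ≤ 2 ^ (a+b) * Tb b := mul_nonneg (by positivity) (le_of_lt (Tb_pos _))
    exact add_le_add (mul_le_mul_of_nonneg_left (tsum_b_le hLC hφ) t1)
      (mul_le_mul_of_nonneg_left (tsum_bt_le hLC hφ a) t2)
  set C1 : ℝ := max C 1 with hC1
  have hC1' : (1:ℝ) ≤ C1 := le_max_right _ _
  have m1 : Tb (a+b) ≤ B * C1 ^ (a+b) * H ^ (a+b) * Mk (a+b) := by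
    have h := h12 (a+b) 0
    rw [hLC.norm0, mul_one, Nat.add_zero] at h
    have hCb : C ^ (a+b) ≤ C1 ^ (a+b) := pow_le_pow_left₀ (le_of_lt hC) (le_max_left C 1) (a+b)
    calc Tb (a+b) ≤ B * C ^ (a+b) * H ^ (a+b) * Mk (a+b) := h
    _ ≤ B * C1 ^ (a+b) * H ^ (a+b) * Mk (a+b) := by
        refine mul_le_mul_of_nonneg_right (mul_le_mul_of_nonneg_right ?_ (by positivity))
          (le_of_lt (hMk _))
        exact mul_le_mul_of_nonneg_left hCb (le_of_lt hB)
  have m2 : Tb b * Mlo a ≤ B * C1 ^ (a+b) * H ^ (a+b) * Mk (a+b) := by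
    have h := h12 b a
    rw [Nat.add_comm b a] at h
    have hCb : C ^ b ≤ C1 ^ (a+b) :=
      le_trans (pow_le_pow_left₀ (le_of_lt hC) (le_max_left C 1) b)
        (pow_le_pow_right₀ hC1' (Nat.le_add_left b a))
    calc Tb b * Mlo a ≤ B * C ^ b * H ^ (a+b) * Mk (a+b) := h
    _ ≤ B * C1 ^ (a+b) * H ^ (a+b) * Mk (a+b) := by
        refine mul_le_mul_of_nonneg_right (mul_le_mul_of_nonneg_right ?_ (by positivity))
          (le_of_lt (hMk _))
        exact mul_le_mul_of_nonneg_left hCb (le_of_lt hB)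
  have hMlo : (0:ℝ) ≤ Mlo a := le_of_lt (hLC.pos a)
  have epow : (2 * C1 * H) ^ (a+b) = 2 ^ (a+b) * C1 ^ (a+b) * H ^ (a+b) := by
    rw [mul_pow, mul_pow]
  have final : 2 ^ (a+b) * Tb (a+b) * 2 + 2 ^ (a+b) * Tb b * (2 * Mlo a)
      ≤ (4 * B) * (2 * C1 * H) ^ (a+b) * Mk (a+b) := by
    have q1 : 2 ^ (a+b) * Tb (a+b) * 2
        ≤ (2 ^ (a+b) * 2) * (B * C1 ^ (a+b) * H ^ (a+b) * Mk (a+b)) := by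
      calc 2 ^ (a+b) * Tb (a+b) * 2 = (2 ^ (a+b) * 2) * Tb (a+b) := by ring
      _ ≤ (2 ^ (a+b) * 2) * (B * C1 ^ (a+b) * H ^ (a+b) * Mk (a+b)) :=
          mul_le_mul_of_nonneg_left m1 (by positivity)
    have q2 : 2 ^ (a+b) * Tb b * (2 * Mlo a)
        ≤ (2 ^ (a+b) * 2) * (B * C1 ^ (a+b) * H ^ (a+b) * Mk (a+b)) := by
      calc 2 ^ (a+b) * Tb b * (2 * Mlo a) = (2 ^ (a+b) * 2) * (Tb b * Mlo a) := by ring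
      _ ≤ (2 ^ (a+b) * 2) * (B * C1 ^ (a+b) * H ^ (a+b) * Mk (a+b)) :=
          mul_le_mul_of_nonneg_left m2 (by positivity)
    calc 2 ^ (a+b) * Tb (a+b) * 2 + 2 ^ (a+b) * Tb b * (2 * Mlo a)
        ≤ (2 ^ (a+b) * 2) * (B * C1 ^ (a+b) * H ^ (a+b) * Mk (a+b)) * 2 := by linarith
    _ = (4 * B) * (2 ^ (a+b) * C1 ^ (a+b) * H ^ (a+b)) * Mk (a+b) := by ring
    _ = (4 * B) * (2 * C1 * H) ^ (a+b) * Mk (a+b) := by rw [epow]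
  linarith

lemma lower_bound (hLC : IsLC Mlo) (hφ : StrictMono φ) (j : ℕ) :
    Mlo (φ j) * ((4:ℝ)⁻¹) ^ (φ j) ≤ tj Mlo φ j ^ (φ j) * fser Mlo φ (tj Mlo φ j) := by
  have h1 : bj Mlo φ j ≤ fser Mlo φ (tj Mlo φ j) := by
    have hs := sum_u hLC hφ (tj Mlo φ j)
    have h0 : ∀ i, 0 ≤ u Mlo φ i (tj Mlo φ j) :=
      fun i => le_of_lt (mul_pos (bj_pos hLC i) (gauss_pos _))
    have hle := Summable.le_tsum hs j (fun i _ => h0 i)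
    have e : u Mlo φ j (tj Mlo φ j) = bj Mlo φ j := by
      unfold u
      rw [sub_self, gauss_zero, mul_one]
    rw [e] at hle
    exact hle
  have htp : (0:ℝ) < tj Mlo φ j ^ (φ j) := pow_pos (tj_pos hLC j) _
  have e2 : bj Mlo φ j * tj Mlo φ j ^ (φ j) = Mlo (φ j) * ((4:ℝ)⁻¹) ^ (φ j) := by
    unfold bj
    rw [div_mul_eq_mul_div, mul_div_mul_right _ _ (ne_of_gt htp), div_eq_mul_inv, inv_pow]
  calc Mlo (φ j) * ((4:ℝ)⁻¹) ^ (φ j) = bj Mlo φ j * tj Mlo φ j ^ (φ j) := e2.symm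
  _ ≤ fser Mlo φ (tj Mlo φ j) * tj Mlo φ j ^ (φ j) :=
      mul_le_mul_of_nonneg_right h1 (le_of_lt htp)
  _ = tj Mlo φ j ^ (φ j) * fser Mlo φ (tj Mlo φ j) := mul_comm _ _

def cterm (Mlo : ℕ → ℝ) (φ : ℕ → ℕ) (j : ℕ) : ℂ → ℂ :=
  fun z => ((bj Mlo φ j : ℝ) : ℂ) * Complex.exp ((((-2⁻¹ : ℝ)) : ℂ) * (z - ((tj Mlo φ j : ℝ) : ℂ)) ^ 2)

def Fc (Mlo : ℕ → ℝ) (φ : ℕ → ℕ) : ℂ → ℂ := fun z => ∑' j, cterm Mlo φ j z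

lemma cterm_diff (j : ℕ) : Differentiable ℂ (cterm Mlo φ j) := by
  apply Differentiable.const_mul
  apply Complex.differentiable_exp.comp
  apply Differentiable.const_mul
  exact (differentiable_id.sub (differentiable_const _)).pow 2

lemma cterm_norm (hLC : IsLC Mlo) (R : ℝ) (j : ℕ) (z : ℂ) (hz : z ∈ Metric.ball (0:ℂ) R) :
    ‖cterm Mlo φ j z‖ ≤ bj Mlo φ j * Real.exp (2⁻¹ * R ^ 2) := by
  unfold cterm
  rw [norm_mul, Complex.norm_real, Real.norm_eq_abs, abs_of_pos (bj_pos hLC j)]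
  refine mul_le_mul_of_nonneg_left ?_ (le_of_lt (bj_pos hLC j))
  rw [Complex.norm_exp]
  rw [Complex.re_ofReal_mul]
  apply Real.exp_le_exp.2
  set w : ℂ := z - ((tj Mlo φ j : ℝ) : ℂ) with hwdef
  have hre : (w ^ 2).re = w.re * w.re - w.im * w.im := by
    rw [pow_two, Complex.mul_re]
  have him : w.im = z.im := by
    rw [hwdef, Complex.sub_im, Complex.ofReal_im, sub_zero]
  have himz : z.im ^ 2 ≤ R ^ 2 := by
    have h1 : |z.im| ≤ ‖z‖ := Complex.abs_im_le_norm z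
    have h2 : ‖z‖ < R := by
      have := Metric.mem_ball.1 hz
      rwa [dist_zero_right] at this
    have h3 : |z.im| ≤ R := le_of_lt (lt_of_le_of_lt h1 h2)
    calc z.im ^ 2 = |z.im| ^ 2 := (sq_abs _).symm
    _ ≤ R ^ 2 := pow_le_pow_left₀ (abs_nonneg _) h3 2
  rw [hre, him]
  nlinarith [sq_nonneg w.re, sq_nonneg z.im]

lemma Fc_diff (hLC : IsLC Mlo) (hφ : StrictMono φ) : Differentiable ℂ (Fc Mlo φ) := by
  intro z0
  set R : ℝ := ‖z0‖ + 1 with hR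
  have hsum : Summable (fun j => bj Mlo φ j * Real.exp (2⁻¹ * R ^ 2)) :=
    (sum_b hLC hφ).mul_right _
  have htu : TendstoUniformlyOn (fun (s : Finset ℕ) (z : ℂ) => ∑ j ∈ s, cterm Mlo φ j z)
      (fun z => ∑' j, cterm Mlo φ j z) Filter.atTop (Metric.ball (0:ℂ) R) :=
    tendstoUniformlyOn_tsum hsum (fun j z hz => cterm_norm hLC R j z hz)
  have hdo : DifferentiableOn ℂ (Fc Mlo φ) (Metric.ball (0:ℂ) R) := by
    refine htu.tendstoLocallyUniformlyOn.differentiableOn ?_ Metric.isOpen_ball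
    refine Filter.Eventually.of_forall (fun s => ?_)
    have hd : Differentiable ℂ (fun z => ∑ j ∈ s, cterm Mlo φ j z) :=
      Differentiable.fun_sum (fun j _ => cterm_diff j)
    exact hd.differentiableOn
  have hz0 : z0 ∈ Metric.ball (0:ℂ) R := by
    rw [Metric.mem_ball, dist_zero_right, hR]
    linarith
  exact (hdo.differentiableAt (Metric.isOpen_ball.mem_nhds hz0))

lemma fser_eq_re (hLC : IsLC Mlo) (hφ : StrictMono φ) (x : ℝ) :
    fser Mlo φ x = (Fc Mlo φ ((x : ℝ) : ℂ)).re := by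
  have hterm : ∀ j, cterm Mlo φ j ((x : ℝ) : ℂ) = ((u Mlo φ j x : ℝ) : ℂ) := by
    intro j
    unfold cterm u RBI.gauss
    rw [Complex.ofReal_mul, Complex.ofReal_exp]
    congr 1
    push_cast
    ring
  have h1 : Fc Mlo φ ((x : ℝ) : ℂ) = ((fser Mlo φ x : ℝ) : ℂ) := by
    unfold Fc fser
    rw [tsum_congr hterm]
    exact (Complex.ofRealCLM.map_tsum (sum_u hLC hφ x)).symm
  rw [h1, Complex.ofReal_re]

lemma fser_contDiff_top (hLC : IsLC Mlo) (hφ : StrictMono φ) :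
    ContDiff ℝ (⊤ : ℕ∞) (fser Mlo φ) := by
  have h1 : AnalyticOnNhd ℂ (Fc Mlo φ) Set.univ :=
    (Fc_diff hLC hφ).differentiableOn.analyticOnNhd isOpen_univ
  have h2 : AnalyticOnNhd ℝ (Fc Mlo φ) Set.univ := h1.restrictScalars
  have h3 : AnalyticOnNhd ℝ (fun x : ℝ => ((x : ℝ) : ℂ)) Set.univ := by
    intro x _
    exact (Complex.ofRealCLM).analyticAt x
  have h4 : AnalyticOnNhd ℝ (fun z : ℂ => z.re) Set.univ := by
    intro z _
    exact (Complex.reCLM).analyticAt z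
  have h5 : AnalyticOnNhd ℝ (fun x : ℝ => (Fc Mlo φ ((x:ℝ):ℂ)).re) Set.univ := by
    have hc1 : AnalyticOnNhd ℝ ((Fc Mlo φ) ∘ (fun x : ℝ => ((x : ℝ) : ℂ))) Set.univ :=
      h2.comp h3 (Set.mapsTo_univ _ _)
    have hc2 : AnalyticOnNhd ℝ ((fun z : ℂ => z.re) ∘ ((Fc Mlo φ) ∘ (fun x : ℝ => ((x : ℝ) : ℂ)))) Set.univ :=
      h4.comp hc1 (Set.mapsTo_univ _ _)
    exact hc2
  have e : fser Mlo φ = fun x : ℝ => (Fc Mlo φ ((x:ℝ):ℂ)).re :=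
    funext (fser_eq_re hLC hφ)
  rw [e]
  exact h5.contDiff

end RBI4
end
end D

section Bridge
open RBI RBI2 RBI3 RBI4

noncomputable section

lemma RBI_pderiv_comp (u : ℝ → ℝ) (hu : Differentiable ℝ u) :
    pderivOp (0 : Fin 1) (fun x : Fin 1 → ℝ => u (x 0)) = fun x => deriv u (x 0) := by
  funext x
  unfold pderivOp
  have hu' : HasDerivAt u (deriv u (x 0)) (x 0) := (hu (x 0)).hasDerivAt
  have hproj : HasFDerivAt (fun y : Fin 1 → ℝ => y 0)
      (ContinuousLinearMap.proj (R := ℝ) (φ := fun _ : Fin 1 => ℝ) 0) x :=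
    (ContinuousLinearMap.proj (R := ℝ) (φ := fun _ : Fin 1 => ℝ) (0 : Fin 1)).hasFDerivAt
  have hcomp := hu'.comp_hasFDerivAt x hproj
  have hcomp' : HasFDerivAt (fun y : Fin 1 → ℝ => u (y 0))
      (deriv u (x 0) • ContinuousLinearMap.proj (R := ℝ) (φ := fun _ : Fin 1 => ℝ) 0) x := hcomp
  rw [hcomp'.fderiv]
  simp [Pi.single_eq_same]

lemma RBI_iterate_pderiv : ∀ (n : ℕ) (u : ℝ → ℝ), (∀ m, Differentiable ℝ (deriv^[m] u)) →
    (pderivOp (0 : Fin 1))^[n] (fun x : Fin 1 → ℝ => u (x 0))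
      = fun x : Fin 1 → ℝ => (deriv^[n] u) (x 0) := by
  intro n
  induction n with
  | zero => intro u _; simp
  | succ n ih =>
    intro u hu
    rw [Function.iterate_succ_apply', ih u hu, Function.iterate_succ' deriv n]
    have hd : Differentiable ℝ (deriv^[n] u) := hu n
    exact RBI_pderiv_comp (deriv^[n] u) hd

lemma RBI_diff_iterates (u : ℝ → ℝ) (hu : ContDiff ℝ ((⊤ : ℕ∞) : WithTop ℕ∞) u) (m : ℕ) :
    Differentiable ℝ (deriv^[m] u) :=
  (hu.iterate_deriv m).differentiable (by simp)

lemma RBI_mderiv_one (u : ℝ → ℝ) (hu : ContDiff ℝ ((⊤ : ℕ∞) : WithTop ℕ∞) u) (β : Fin 1 → ℕ)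
    (x : Fin 1 → ℝ) :
    mderiv β (fun x : Fin 1 → ℝ => u (x 0)) x = iteratedDeriv (β 0) u (x 0) := by
  have e1 : mderiv β (fun x : Fin 1 → ℝ => u (x 0))
      = (pderivOp (0 : Fin 1))^[β 0] (fun x : Fin 1 → ℝ => u (x 0)) := rfl
  rw [e1, RBI_iterate_pderiv (β 0) u (RBI_diff_iterates u hu), iteratedDeriv_eq_iterate]

lemma RBI_mpow_one (x : Fin 1 → ℝ) (α : Fin 1 → ℕ) : mpow x α = x 0 ^ α 0 := by
  unfold mpow
  exact Fin.prod_univ_one _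

lemma RBI_msize_one (α : Fin 1 → ℕ) : msize α = α 0 := by
  unfold msize
  exact Fin.sum_univ_one _

/-- The counterexample function for the converse direction. -/
theorem RBI_counterexample (Mlo Mk Nk : ℕ → ℝ) (hLC : IsLC Mlo) (hMk : ∀ p, 0 < Mk p)
    (hNk : ∀ p, 0 < Nk p) (B C H : ℝ) (hB : 0 < B) (hC : 0 < C) (hH : 0 < H)
    (h12 : ∀ p q : ℕ, (p:ℝ) ^ ((p:ℝ) / 2) * Mlo q ≤ B * C ^ p * H ^ (p + q) * Mk (p + q))
    (ε : ℝ) (hε0 : 0 < ε) (hε1 : ε ≤ 1) (φ : ℕ → ℕ) (hφ : StrictMono φ)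
    (hbad : ∀ j, ε ^ (φ j) * Nk (φ j) ≤ Mlo (φ j)) :
    ∃ F : (Fin 1 → ℝ) → ℝ, F ∈ SRoumieuSeq Mk 1 ∧ F ∉ SBeurlingSeq Nk 1 := by
  classical
  set F : (Fin 1 → ℝ) → ℝ := fun x => fser Mlo φ (x 0) with hF
  have hfsm : ContDiff ℝ (⊤ : ℕ∞) (fser Mlo φ) := fser_contDiff_top hLC hφ
  have hFsm : ContDiff ℝ (⊤ : ℕ∞) F := by
    have hproj : ContDiff ℝ (⊤ : ℕ∞) (fun x : Fin 1 → ℝ => x 0) :=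
      (ContinuousLinearMap.proj (R := ℝ) (φ := fun _ : Fin 1 => ℝ) 0).contDiff
    exact hfsm.comp hproj
  have hfsmInf : ContDiff ℝ ((⊤ : ℕ∞) : WithTop ℕ∞) (fser Mlo φ) := hfsm.of_le (by simp)
  have hmd : ∀ (β : Fin 1 → ℕ) (x : Fin 1 → ℝ),
      mderiv β F x = iteratedDeriv (β 0) (fser Mlo φ) (x 0) := fun β x =>
    RBI_mderiv_one (fser Mlo φ) hfsmInf β x
  refine ⟨F, ⟨hFsm, ?_⟩, ?_⟩
  · -- Roumieu membership
    have hC1 : (0:ℝ) < max C 1 := lt_of_lt_of_le one_pos (le_max_right _ _)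
    have h4B : (0:ℝ) < 4 * B := by positivity
    refine ⟨4 * B, h4B, 2 * max C 1 * H, mul_pos (mul_pos two_pos hC1) hH, ?_⟩
    intro α β x
    rw [hmd β x, RBI_mpow_one x α, RBI_msize_one α, RBI_msize_one β]
    rw [abs_mul, abs_pow]
    exact membership hLC hφ Mk hMk B C H hB hC hH h12 (α 0) (β 0) (x 0)
  · -- not Beurling
    intro hBeu
    obtain ⟨-, hB2⟩ := hBeu
    obtain ⟨C0, hC0, hbound⟩ := hB2 (ε / 8) (by positivity)
    have key : ∀ j : ℕ, (2:ℝ) ^ (φ j) ≤ C0 := by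
      intro j
      set p := φ j with hp
      have h1 := hbound (fun _ => p) (fun _ => 0) (fun _ => tj Mlo φ j)
      rw [hmd _ _, RBI_mpow_one _ _, RBI_msize_one _, RBI_msize_one _] at h1
      simp only [iteratedDeriv_zero] at h1
      have hlow : Mlo p * ((4:ℝ)⁻¹) ^ p ≤ |tj Mlo φ j ^ p * fser Mlo φ (tj Mlo φ j)| :=
        le_trans (lower_bound hLC hφ j) (le_abs_self _)
      have h2 : Mlo p * ((4:ℝ)⁻¹) ^ p ≤ C0 * (ε / 8) ^ (p + 0) * Nk (p + 0) :=
        le_trans hlow h1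
      rw [Nat.add_zero] at h2
      have h3 : ε ^ p * Nk p * ((4:ℝ)⁻¹) ^ p ≤ C0 * (ε / 8) ^ p * Nk p := by
        calc ε ^ p * Nk p * ((4:ℝ)⁻¹) ^ p
            ≤ Mlo p * ((4:ℝ)⁻¹) ^ p :=
              mul_le_mul_of_nonneg_right (hbad j) (by positivity)
        _ ≤ C0 * (ε / 8) ^ p * Nk p := h2
      have he : ε ^ p * ((4:ℝ)⁻¹) ^ p = 2 ^ p * (ε / 8) ^ p := by
        rw [← mul_pow, ← mul_pow]
        congr 1
        ring
      have h4 : 2 ^ p * (ε / 8) ^ p * Nk p ≤ C0 * (ε / 8) ^ p * Nk p := by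
        calc (2:ℝ) ^ p * (ε / 8) ^ p * Nk p = ε ^ p * ((4:ℝ)⁻¹) ^ p * Nk p := by rw [he]
        _ = ε ^ p * Nk p * ((4:ℝ)⁻¹) ^ p := by ring
        _ ≤ C0 * (ε / 8) ^ p * Nk p := h3
      have hpos : (0:ℝ) < (ε / 8) ^ p * Nk p := mul_pos (pow_pos (by positivity) p) (hNk p)
      have h5 : (2:ℝ) ^ p * ((ε / 8) ^ p * Nk p) ≤ C0 * ((ε / 8) ^ p * Nk p) := by
        calc (2:ℝ) ^ p * ((ε / 8) ^ p * Nk p) = 2 ^ p * (ε / 8) ^ p * Nk p := by ring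
        _ ≤ C0 * (ε / 8) ^ p * Nk p := h4
        _ = C0 * ((ε / 8) ^ p * Nk p) := by ring
      exact le_of_mul_le_mul_right h5 hpos
    obtain ⟨n, hn⟩ := pow_unbounded_of_one_lt C0 (one_lt_two (α := ℝ))
    have h6 : (2:ℝ) ^ n ≤ 2 ^ (φ n) := pow_le_pow_right₀ one_le_two (hφ.le_apply)
    exact absurd (le_trans h6 (key n)) (not_le.2 hn)

end
end Bridge

section Final
noncomputable section

/-- forward direction single-sequence workhorse -/
lemma RBI_forward (Ml Nk : ℕ → ℝ) (hMpos : ∀ p, 0 < Ml p) (hNpos : ∀ p, 0 < Nk p)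
    (hlt : seqLtriangle Ml Nk) {d : ℕ} (f : (Fin d → ℝ) → ℝ) (C h : ℝ) (hC : 0 < C)
    (hh : 0 < h) (hb : seqBound Ml h C f) (h' : ℝ) (hh' : 0 < h') :
    ∃ C' > 0, seqBound Nk h' C' f := by
  have hq : (0:ℝ) < h' / (2 * h) := by positivity
  obtain ⟨P, hP⟩ := (Metric.tendsto_atTop.1 hlt) (h' / (2 * h)) hq
  set P0 := max P 1 with hP0
  have key : ∀ p, P0 ≤ p → h ^ p * Ml p ≤ h' ^ p * Nk p := by
    intro p hp
    have hp1 : 1 ≤ p := le_trans (le_max_right P 1) hp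
    have hpP : P ≤ p := le_trans (le_max_left P 1) hp
    have hd := hP p hpP
    rw [Real.dist_eq, sub_zero] at hd
    have hdiv : (0:ℝ) < Ml p / Nk p := div_pos (hMpos p) (hNpos p)
    have hg0 : (0:ℝ) ≤ (Ml p / Nk p) ^ (1 / (p:ℝ)) := Real.rpow_nonneg (le_of_lt hdiv) _
    have hval : (Ml p / Nk p) ^ (1 / (p:ℝ)) < h' / (2 * h) := by
      rwa [abs_of_nonneg hg0] at hd
    have hpne : (p:ℝ) ≠ 0 := by
      have : (0:ℝ) < (p:ℝ) := by exact_mod_cast hp1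
      exact ne_of_gt this
    have e : (((Ml p / Nk p) ^ (1 / (p:ℝ))) : ℝ) ^ (p:ℕ) = Ml p / Nk p := by
      rw [← Real.rpow_natCast ((Ml p / Nk p) ^ (1 / (p:ℝ))) p,
        ← Real.rpow_mul (le_of_lt hdiv), one_div, inv_mul_cancel₀ hpne, Real.rpow_one]
    have hle : Ml p / Nk p ≤ (h' / (2 * h)) ^ p := by
      rw [← e]
      exact pow_le_pow_left₀ hg0 (le_of_lt hval) p
    have h1 : Ml p ≤ (h' / (2 * h)) ^ p * Nk p := by
      rw [div_le_iff₀ (hNpos p)] at hle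
      exact hle
    calc h ^ p * Ml p ≤ h ^ p * ((h' / (2 * h)) ^ p * Nk p) :=
        mul_le_mul_of_nonneg_left h1 (by positivity)
    _ = (h' / 2) ^ p * Nk p := by
        rw [← mul_assoc, ← mul_pow]
        congr 2
        field_simp
    _ ≤ h' ^ p * Nk p := by
        refine mul_le_mul_of_nonneg_right (pow_le_pow_left₀ (by positivity) (by linarith) p)
          (le_of_lt (hNpos p))
  set K : ℝ := 1 + ∑ p ∈ Finset.range P0, (h ^ p * Ml p) / (h' ^ p * Nk p) with hK
  have hterm_nonneg : ∀ p ∈ Finset.range P0, (0:ℝ) ≤ (h ^ p * Ml p) / (h' ^ p * Nk p) := by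
    intro p _
    have := hMpos p
    have := hNpos p
    positivity
  have hK1 : (1:ℝ) ≤ K := by
    rw [hK]
    have := Finset.sum_nonneg hterm_nonneg
    linarith
  have hKpos : (0:ℝ) < K := lt_of_lt_of_le one_pos hK1
  have keysmall : ∀ p, p < P0 → h ^ p * Ml p ≤ K * (h' ^ p * Nk p) := by
    intro p hp
    have hmem : p ∈ Finset.range P0 := Finset.mem_range.2 hp
    have hsingle : (h ^ p * Ml p) / (h' ^ p * Nk p)
        ≤ ∑ q ∈ Finset.range P0, (h ^ q * Ml q) / (h' ^ q * Nk q) :=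
      Finset.single_le_sum hterm_nonneg hmem
    have hden : (0:ℝ) < h' ^ p * Nk p := by
      have := hNpos p
      positivity
    rw [div_le_iff₀ hden] at hsingle
    calc h ^ p * Ml p ≤ (∑ q ∈ Finset.range P0, (h ^ q * Ml q) / (h' ^ q * Nk q))
          * (h' ^ p * Nk p) := hsingle
    _ ≤ K * (h' ^ p * Nk p) := by
        refine mul_le_mul_of_nonneg_right ?_ (le_of_lt hden)
        rw [hK]; linarith
  refine ⟨C * K, by positivity, ?_⟩
  intro α β x
  have hball := hb α β x
  set s := msize α + msize β with hs
  have hcase : h ^ s * Ml s ≤ K * (h' ^ s * Nk s) := by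
    rcases lt_or_ge s P0 with hlt' | hge
    · exact keysmall s hlt'
    · calc h ^ s * Ml s ≤ h' ^ s * Nk s := key s hge
      _ ≤ K * (h' ^ s * Nk s) := by
          have hden : (0:ℝ) < h' ^ s * Nk s := by
            have := hNpos s
            positivity
          nlinarith
  calc |mpow x α * mderiv β f x| ≤ C * h ^ s * Ml s := hball
  _ ≤ C * K * h' ^ s * Nk s := by
      have h2 : C * (h ^ s * Ml s) ≤ C * (K * (h' ^ s * Nk s)) :=
        mul_le_mul_of_nonneg_left hcase (le_of_lt hC)
      calc C * h ^ s * Ml s = C * (h ^ s * Ml s) := by ring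
      _ ≤ C * (K * (h' ^ s * Nk s)) := h2
      _ = C * K * h' ^ s * Nk s := by ring

end
end Final

/-- Theorem `Gelfand-inclusion2newmixed`: for weight matrices `𝓜, 𝓝`,
`𝓜 ◁ 𝓝` implies `S_{{𝓜}}(ℝ^d) ⊆ S_(𝓝)(ℝ^d)` for every `d`; conversely, if both matrices
are standard log-convex, `𝓜` satisfies (12L2R) and (M2')_R, `𝓝` satisfies (12L2B) and
(M2')_B, and the inclusion holds in dimension `1`, then `𝓜 ◁ 𝓝`. -/
theorem roumieu_beurling_inclusion_characterization_weight_matrices (M N : ℝ → ℕ → ℝ)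
    (hM : IsWeightMatrix M) (hN : IsWeightMatrix N) :
    (matLtriangle M N → ∀ d : ℕ, 0 < d → SRoumieuMat M d ⊆ SBeurlingMat N d) ∧
    (StdLogConvex M → StdLogConvex N →
      cond12L2RMat M → condM2'RMat M → cond12L2BMat N → condM2'BMat N →
      SRoumieuMat M 1 ⊆ SBeurlingMat N 1 → matLtriangle M N) := by
  constructor
  · -- forward direction
    intro hlt d _hd f hf
    obtain ⟨l, hl, hsm, C, hC, h, hh, hbound⟩ := hf
    intro k hk
    refine ⟨hsm, ?_⟩
    intro h' hh'
    obtain ⟨C', hC', hb'⟩ := RBI_forward (M l) (N k) (fun p => (hM.1 l hl).1 p)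
      (fun p => (hN.1 k hk).1 p) (hlt l hl k hk) f C h hC hh hbound h' hh'
    exact ⟨C', hC', hb'⟩
  · -- converse direction
    intro hSLM _hSLN h12M _hM2R _h12BN _hM2BN hinc
    intro l hl k hk
    by_contra hcon
    rw [seqLtriangle, Metric.tendsto_atTop] at hcon
    push_neg at hcon
    obtain ⟨ε, hε, hfreq⟩ := hcon
    set ε1 : ℝ := min ε 1 with hε1def
    have hε10 : 0 < ε1 := lt_min hε one_pos
    have hε11 : ε1 ≤ 1 := min_le_right _ _
    have hNpos : ∀ p, 0 < N k p := fun p => (hN.1 k hk).1 p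
    have hMpos : ∀ p, 0 < M l p := fun p => (hM.1 l hl).1 p
    have hQ : ∃ᶠ p in Filter.atTop, ε1 ^ p * N k p ≤ M l p := by
      rw [Filter.frequently_atTop]
      intro P
      obtain ⟨p, hpP, hpd⟩ := hfreq (max P 1)
      refine ⟨p, le_trans (le_max_left P 1) hpP, ?_⟩
      have hp1 : 1 ≤ p := le_trans (le_max_right P 1) hpP
      rw [Real.dist_eq, sub_zero] at hpd
      have hdiv : (0:ℝ) < M l p / N k p := div_pos (hMpos p) (hNpos p)
      have hg0 : (0:ℝ) ≤ (M l p / N k p) ^ (1 / (p:ℝ)) :=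
        Real.rpow_nonneg (le_of_lt hdiv) _
      rw [abs_of_nonneg hg0] at hpd
      have hval : ε1 ≤ (M l p / N k p) ^ (1 / (p:ℝ)) := le_trans (min_le_left _ _) hpd
      have hpne : (p:ℝ) ≠ 0 := by
        have : (0:ℝ) < (p:ℝ) := by exact_mod_cast hp1
        exact ne_of_gt this
      have e : (((M l p / N k p) ^ (1 / (p:ℝ))) : ℝ) ^ (p:ℕ) = M l p / N k p := by
        rw [← Real.rpow_natCast ((M l p / N k p) ^ (1 / (p:ℝ))) p,
          ← Real.rpow_mul (le_of_lt hdiv), one_div, inv_mul_cancel₀ hpne, Real.rpow_one]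
      have h1 : ε1 ^ p ≤ M l p / N k p := by
        rw [← e]
        exact pow_le_pow_left₀ (le_of_lt hε10) hval p
      rw [le_div_iff₀ (hNpos p)] at h1
      exact h1
    obtain ⟨φ, hφ, hbad⟩ := Filter.extraction_of_frequently_atTop hQ
    obtain ⟨κ, hκ, B, hB, C, hC, H, hH, h12⟩ := h12M l hl
    have hκ0 : 0 < κ := lt_of_lt_of_le hl hκ
    obtain ⟨F, hFR, hFnB⟩ := RBI_counterexample (M l) (M κ) (N k) (hSLM l hl)
      (fun p => (hSLM κ hκ0).pos p) hNpos B C H hB hC hH h12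
      ε1 hε10 hε11 φ hφ hbad
    exact hFnB (hinc ⟨κ, hκ0, hFR⟩ k hk)
end
end
end
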